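/- arXiv:2109.08810 — 12 statements merged into one kernel-verified Lean document; each statement's English description precedes it below -/
import Mathlib

section
/- There exists a unique differentiable function f : ℝ → ℝ with f(0) = 0 satisfying f'(t) = (1 + 2·f(t)²)^(-1/2) for all t ∈ ℝ; moreover this function f is odd (f(-t) = -f(t) for all t), strictly increasing on ℝ, and a bijection from ℝ onto ℝ. -/
/-!
Let `G s = ∫₀ˢ √(1 + 2u²) du`. Since the integrand is continuous, even and at least `1`, `G` is an
odd increasing homeomorphism of `ℝ` with `G' = √(1 + 2s²)`, so its inverse solves the equation.
Conversely, for any solution `f` the chain rule gives `(G ∘ f)' = 1`, hence `G ∘ f = id` and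
`f = G⁻¹`, which inherits oddness, monotonicity and bijectivity from `G`.
-/

open Filter intervalIntegral

noncomputable section

def primitiveFromZero (φ : ℝ → ℝ) (s : ℝ) : ℝ := ∫ u in (0 : ℝ)..s, φ u

namespace primitiveFromZero

variable {φ : ℝ → ℝ}

@[simp]
lemma apply_zero : primitiveFromZero φ 0 = 0 := integral_same

lemma hasDerivAt (hφ : Continuous φ) (s : ℝ) : HasDerivAt (primitiveFromZero φ) (φ s) s :=
  (hφ.integral_hasStrictDerivAt 0 s).hasDerivAt

lemma strictMono (hφ : Continuous φ) (hpos : ∀ u, 0 < φ u) :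
    StrictMono (primitiveFromZero φ) :=
  strictMono_of_hasDerivAt_pos (hasDerivAt hφ) hpos

lemma surjective (hφ : Continuous φ) (h_one_le : ∀ u, 1 ≤ φ u) :
    Function.Surjective (primitiveFromZero φ) := by
  have hmono : Monotone fun s => primitiveFromZero φ s - s :=
    monotone_of_hasDerivAt_nonneg (fun s => (hasDerivAt hφ s).sub (hasDerivAt_id s))
      (fun u => sub_nonneg.2 (h_one_le u))
  have hcont : Continuous (primitiveFromZero φ) :=
    continuous_iff_continuousAt.2 fun s => (hasDerivAt hφ s).continuousAt
  refine hcont.surjective ?_ ?_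
  · refine tendsto_atTop_mono' _ (eventually_atTop.2 ⟨0, fun s hs => ?_⟩) tendsto_id
    simpa using hmono hs
  · refine tendsto_atBot_mono' _ (eventually_atBot.2 ⟨0, fun s hs => ?_⟩) tendsto_id
    simpa using hmono hs

lemma apply_neg (h_even : ∀ u, φ (-u) = φ u) (s : ℝ) :
    primitiveFromZero φ (-s) = -primitiveFromZero φ s := by
  have h : (∫ u in (0 : ℝ)..s, φ (-u)) = ∫ u in (0 : ℝ)..s, φ u := by simp only [h_even]
  rw [integral_comp_neg, neg_zero, integral_symm] at h
  rw [primitiveFromZero, primitiveFromZero, ← h, neg_neg]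

-- `G ∘ f - id` has derivative `φ (f t) / φ (f t) - 1 = 0`.
lemma apply_eq_of_hasDerivAt (hφ : Continuous φ) (hne : ∀ u, φ u ≠ 0) {f : ℝ → ℝ}
    (h_zero : f 0 = 0) (hf : ∀ t, HasDerivAt f (1 / φ (f t)) t) (t : ℝ) :
    primitiveFromZero φ (f t) = t := by
  have hderiv : ∀ t, HasDerivAt (fun t => primitiveFromZero φ (f t) - t) 0 t := fun t => by
    have h := ((hasDerivAt hφ (f t)).comp t (hf t)).sub (hasDerivAt_id t)
    rwa [one_div, mul_inv_cancel₀ (hne _), sub_self] at h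
  have hconst := is_const_of_deriv_eq_zero (fun t => (hderiv t).differentiableAt)
    (fun t => (hderiv t).deriv) t 0
  simpa [h_zero, sub_eq_zero] using hconst

def orderIso (hφ : Continuous φ) (h_one_le : ∀ u, 1 ≤ φ u) : ℝ ≃o ℝ :=
  StrictMono.orderIsoOfSurjective _ (strictMono hφ fun u => one_pos.trans_le (h_one_le u))
    (surjective hφ h_one_le)

variable (hφ : Continuous φ) (h_one_le : ∀ u, 1 ≤ φ u)
include hφ h_one_le

lemma orderIso_apply (s : ℝ) : orderIso hφ h_one_le s = primitiveFromZero φ s := rfl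

lemma hasDerivAt_orderIso_symm (t : ℝ) :
    HasDerivAt (orderIso hφ h_one_le).symm (1 / φ ((orderIso hφ h_one_le).symm t)) t := by
  rw [one_div]
  exact .of_local_left_inverse (orderIso hφ h_one_le).symm.continuous.continuousAt
    (hasDerivAt hφ _) (one_pos.trans_le (h_one_le _)).ne'
    (.of_forall (orderIso hφ h_one_le).apply_symm_apply)

lemma eq_orderIso_symm {f : ℝ → ℝ} (h_zero : f 0 = 0) (hf : ∀ t, HasDerivAt f (1 / φ (f t)) t) :
    f = (orderIso hφ h_one_le).symm := by
  funext t
  rw [OrderIso.eq_symm_apply, orderIso_apply,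
    apply_eq_of_hasDerivAt hφ (fun u => (one_pos.trans_le (h_one_le u)).ne') h_zero hf]

lemma orderIso_symm_neg (h_even : ∀ u, φ (-u) = φ u) (t : ℝ) :
    (orderIso hφ h_one_le).symm (-t) = -(orderIso hφ h_one_le).symm t := by
  rw [OrderIso.symm_apply_eq, orderIso_apply, apply_neg h_even, ← orderIso_apply hφ h_one_le,
    OrderIso.apply_symm_apply]

end primitiveFromZero

end

/-- There exists a unique differentiable function `f : ℝ → ℝ` with `f 0 = 0` satisfying
`f'(t) = (1 + 2 f(t)²)^(-1/2)` for all `t`; moreover this `f` is odd, strictly increasing,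
and a bijection from `ℝ` onto `ℝ`. -/
theorem stmt_0 :
    (∃! f : ℝ → ℝ, f 0 = 0 ∧
      ∀ t : ℝ, HasDerivAt f (1 / Real.sqrt (1 + 2 * f t ^ 2)) t) ∧
    (∀ f : ℝ → ℝ, f 0 = 0 →
      (∀ t : ℝ, HasDerivAt f (1 / Real.sqrt (1 + 2 * f t ^ 2)) t) →
      (∀ t : ℝ, f (-t) = -f t) ∧ StrictMono f ∧ Function.Bijective f) := by
  have hφ : Continuous fun u : ℝ => Real.sqrt (1 + 2 * u ^ 2) := by fun_prop
  have h_one_le (u : ℝ) : 1 ≤ Real.sqrt (1 + 2 * u ^ 2) :=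
    Real.one_le_sqrt.2 (by nlinarith [sq_nonneg u])
  have h_even (u : ℝ) : Real.sqrt (1 + 2 * (-u) ^ 2) = Real.sqrt (1 + 2 * u ^ 2) := by
    rw [neg_sq]
  set e := primitiveFromZero.orderIso hφ h_one_le
  refine ⟨⟨e.symm, ⟨?_, primitiveFromZero.hasDerivAt_orderIso_symm hφ h_one_le⟩,
    fun f ⟨h_zero, hf⟩ =>
      primitiveFromZero.eq_orderIso_symm hφ h_one_le h_zero hf⟩, fun f h_zero hf => ?_⟩
  · rw [OrderIso.symm_apply_eq, primitiveFromZero.orderIso_apply,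
      primitiveFromZero.apply_zero]
  · obtain rfl := primitiveFromZero.eq_orderIso_symm hφ h_one_le h_zero hf
    exact ⟨primitiveFromZero.orderIso_symm_neg hφ h_one_le h_even, e.symm.strictMono,
      e.symm.bijective⟩
end

section
/- For all t ∈ ℝ, one has |f(t)| ≤ |t|, and also |f(t)| ≤ 2^(1/4)·|t|^(1/2). -/
/-! Both bounds are mean value estimates from `f 0 = 0`: the derivative `(1 + 2 f²)^(-1/2)` of `f`
is at most `1`, and the derivative `2 f / √(1 + 2 f²)` of `f²` is at most `√2`, so that
`f t ² ≤ √2 |t|`. -/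

open Real

lemma abs_sub_le_of_forall_hasDerivAt_abs_le {g g' : ℝ → ℝ} {C : ℝ}
    (hg : ∀ x, HasDerivAt g (g' x) x) (bound : ∀ x, |g' x| ≤ C) (x y : ℝ) :
    |g y - g x| ≤ C * |y - x| :=
  convex_univ.norm_image_sub_le_of_norm_hasDerivWithin_le (fun z _ => (hg z).hasDerivWithinAt)
    (fun z _ => bound z) (Set.mem_univ x) (Set.mem_univ y)

lemma one_le_sqrt_one_add_two_mul_sq (a : ℝ) : 1 ≤ √(1 + 2 * a ^ 2) :=
  one_le_sqrt.mpr (by nlinarith [sq_nonneg a])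

lemma abs_one_div_sqrt_one_add_two_mul_sq_le_one (a : ℝ) : |1 / √(1 + 2 * a ^ 2)| ≤ 1 := by
  rw [abs_of_nonneg (by positivity)]
  exact div_le_one_of_le₀ (one_le_sqrt_one_add_two_mul_sq a) (sqrt_nonneg _)

lemma abs_two_mul_mul_one_div_sqrt_one_add_two_mul_sq_le (a : ℝ) :
    |2 * a * (1 / √(1 + 2 * a ^ 2))| ≤ √2 := by
  have hpos : 0 < √(1 + 2 * a ^ 2) := one_pos.trans_le (one_le_sqrt_one_add_two_mul_sq a)
  have hsq : (2 * a) ^ 2 ≤ 2 * (1 + 2 * a ^ 2) := by nlinarith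
  rw [mul_one_div, abs_div, abs_of_pos hpos, div_le_iff₀ hpos, ← sqrt_mul zero_le_two,
    ← sqrt_sq_eq_abs]
  exact sqrt_le_sqrt hsq

lemma abs_le_two_rpow_mul_abs_rpow_of_sq_le {y t : ℝ} (h : y ^ 2 ≤ √2 * |t|) :
    |y| ≤ (2 : ℝ) ^ ((1 : ℝ) / 4) * |t| ^ ((1 : ℝ) / 2) :=
  calc |y| = √(y ^ 2) := (sqrt_sq_eq_abs y).symm
    _ ≤ √(√2 * |t|) := sqrt_le_sqrt h
    _ = √(√2) * √|t| := sqrt_mul (sqrt_nonneg 2) _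
    _ = (2 : ℝ) ^ ((1 : ℝ) / 4) * |t| ^ ((1 : ℝ) / 2) := by
      rw [sqrt_eq_rpow, sqrt_eq_rpow, sqrt_eq_rpow, ← rpow_mul zero_le_two]
      norm_num

theorem stmt_2_general (f : ℝ → ℝ) (hf0 : f 0 = 0)
    (hf' : ∀ t : ℝ, HasDerivAt f (1 / Real.sqrt (1 + 2 * f t ^ 2)) t) :
    ∀ t : ℝ, |f t| ≤ |t| ∧ |f t| ≤ (2 : ℝ) ^ ((1 : ℝ) / 4) * |t| ^ ((1 : ℝ) / 2) := by
  intro t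
  have hf_sq : ∀ x, HasDerivAt (fun y => f y ^ 2) (2 * f x * (1 / √(1 + 2 * f x ^ 2))) x :=
    fun x => by simpa using (hf' x).fun_pow 2
  have hf_lip := abs_sub_le_of_forall_hasDerivAt_abs_le hf'
    (fun x => abs_one_div_sqrt_one_add_two_mul_sq_le_one (f x)) 0 t
  have hf_sq_lip := abs_sub_le_of_forall_hasDerivAt_abs_le hf_sq
    (fun x => abs_two_mul_mul_one_div_sqrt_one_add_two_mul_sq_le (f x)) 0 t
  simp only [hf0, sub_zero, one_mul, ne_eq, OfNat.ofNat_ne_zero, not_false_eq_true, zero_pow,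
    abs_pow, sq_abs] at hf_lip hf_sq_lip
  exact ⟨hf_lip, abs_le_two_rpow_mul_abs_rpow_of_sq_le hf_sq_lip⟩

/-- For all `t`, `|f t| ≤ |t|` and `|f t| ≤ 2^(1/4) |t|^(1/2)`. -/
theorem stmt_2 (f : ℝ → ℝ) (hf0 : f 0 = 0)
    (hfodd : ∀ t : ℝ, f (-t) = -f t)
    (hf' : ∀ t : ℝ, HasDerivAt f (1 / Real.sqrt (1 + 2 * f t ^ 2)) t) :
    ∀ t : ℝ, |f t| ≤ |t| ∧ |f t| ≤ (2 : ℝ) ^ ((1 : ℝ) / 4) * |t| ^ ((1 : ℝ) / 2) :=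
  stmt_2_general f hf0 hf'
end

section
/- The limit of |f(t)| / |t|^(1/2) as |t| → +∞ equals 2^(1/4); that is, for every ε > 0 there exists M > 0 such that for all t with |t| ≥ M one has | |f(t)|/|t|^(1/2) − 2^(1/4) | < ε. -/
/-!
Separating variables in `f' = (1 + 2 f²)^(-1/2)` shows that `f` inverts the odd function
`G y = ∫₀^y √(1 + 2 s²) ds`. Since `√2 y² / 2 ≤ G y ≤ y + √2 y² / 2` for `y ≥ 0`, the relation
`G |f t| = |t|` forces `|f t|² ≈ √2 |t|`, with `0 ≤ 2^(1/4) - |f t| / √|t| ≤ √2 / √|t|`.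
-/

open Real

/-- `∫₀^y √(1 + 2 s²) ds` in closed form; the equation for `f` says that this inverts `f`. -/
noncomputable def dualChangeInv (y : ℝ) : ℝ :=
  y * √(1 + 2 * y ^ 2) / 2 + arsinh (√2 * y) / (2 * √2)

lemma hasDerivAt_dualChangeInv (y : ℝ) :
    HasDerivAt dualChangeInv (√(1 + 2 * y ^ 2)) y := by
  have hpos : (0 : ℝ) < 1 + 2 * y ^ 2 := by positivity
  have hsq : HasDerivAt (fun y : ℝ => 1 + 2 * y ^ 2) (4 * y) y :=
    (((hasDerivAt_pow 2 y).const_mul 2).const_add 1).congr_deriv (by norm_num; ring)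
  have hprod := ((hasDerivAt_id y).mul (hsq.sqrt hpos.ne')).div_const 2
  have harsinh :=
    ((hasDerivAt_arsinh _).comp y ((hasDerivAt_id y).const_mul √2)).div_const (2 * √2)
  refine (hprod.add harsinh).congr_deriv ?_
  have h2 : (√2 * y) ^ 2 = 2 * y ^ 2 := by rw [mul_pow, sq_sqrt zero_le_two]
  have hS : √(1 + 2 * y ^ 2) ^ 2 = 1 + 2 * y ^ 2 := sq_sqrt hpos.le
  have : (0 : ℝ) < √(1 + 2 * y ^ 2) := sqrt_pos.mpr hpos
  simp only [id, h2, mul_one]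
  field_simp
  linear_combination -2 * hS

lemma dualChangeInv_zero : dualChangeInv 0 = 0 := by simp [dualChangeInv]

lemma dualChangeInv_neg (y : ℝ) : dualChangeInv (-y) = -dualChangeInv y := by
  simp only [dualChangeInv, neg_sq, mul_neg, arsinh_neg]
  ring

lemma mul_sq_div_two_le_dualChangeInv {y : ℝ} (hy : 0 ≤ y) :
    √2 * y ^ 2 / 2 ≤ dualChangeInv y := by
  have hsqrt : √2 * y ≤ √(1 + 2 * y ^ 2) := by
    calc √2 * y = √(2 * y ^ 2) := by rw [sqrt_mul zero_le_two, sqrt_sq hy]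
      _ ≤ √(1 + 2 * y ^ 2) := sqrt_le_sqrt (by linarith)
  have harsinh : 0 ≤ arsinh (√2 * y) := arsinh_nonneg_iff.mpr (by positivity)
  have : 0 ≤ arsinh (√2 * y) / (2 * √2) := by positivity
  unfold dualChangeInv
  nlinarith

lemma dualChangeInv_le {y : ℝ} (hy : 0 ≤ y) :
    dualChangeInv y ≤ y + √2 * y ^ 2 / 2 := by
  have hsqrt2 : (0 : ℝ) < √2 := by positivity
  have hsqrt : √(1 + 2 * y ^ 2) ≤ 1 + √2 * y := by
    rw [sqrt_le_left (by positivity)]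
    nlinarith [sq_sqrt zero_le_two]
  have harsinh : arsinh (√2 * y) ≤ √2 * y := by
    rw [← sinh_le_sinh, sinh_arsinh]
    exact self_le_sinh_iff.mpr (by positivity)
  have : arsinh (√2 * y) / (2 * √2) ≤ y / 2 := by
    rw [div_le_iff₀ (by positivity)]
    linarith
  unfold dualChangeInv
  nlinarith

lemma dualChangeInv_abs (y : ℝ) : dualChangeInv |y| = |dualChangeInv y| := by
  have hnonneg {z : ℝ} (hz : 0 ≤ z) : 0 ≤ dualChangeInv z :=
    le_trans (by positivity) (mul_sq_div_two_le_dualChangeInv hz)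
  rcases le_or_gt 0 y with hy | hy
  · rw [abs_of_nonneg hy, abs_of_nonneg (hnonneg hy)]
  · have hG : 0 ≤ dualChangeInv (-y) := hnonneg (by linarith)
    rw [dualChangeInv_neg] at hG
    rw [abs_of_neg hy, abs_of_nonpos (by linarith), dualChangeInv_neg]

lemma dualChangeInv_comp_eq_self {f : ℝ → ℝ} (hf0 : f 0 = 0)
    (hf' : ∀ t, HasDerivAt f (1 / √(1 + 2 * f t ^ 2)) t) (t : ℝ) :
    dualChangeInv (f t) = t := by
  have hderiv (t : ℝ) : HasDerivAt (fun t => dualChangeInv (f t) - t) 0 t := by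
    have hS : (0 : ℝ) < √(1 + 2 * f t ^ 2) := sqrt_pos.mpr (by positivity)
    refine (((hasDerivAt_dualChangeInv (f t)).comp t (hf' t)).sub (hasDerivAt_id t)).congr_deriv ?_
    field_simp
    ring
  have := is_const_of_deriv_eq_zero (fun t => (hderiv t).differentiableAt)
    (fun t => (hderiv t).deriv) t 0
  simp only [hf0, dualChangeInv_zero, sub_zero] at this
  linarith

lemma two_rpow_quarter_sq : ((2 : ℝ) ^ ((1 : ℝ) / 4)) ^ 2 = √2 := by
  rw [sqrt_eq_rpow, ← rpow_natCast, ← rpow_mul zero_le_two]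
  norm_num

lemma abs_div_sqrt_sub_two_rpow_quarter_le {y s : ℝ} (hy : 0 ≤ y) (hs : 0 < s)
    (hlow : √2 * y ^ 2 / 2 ≤ s) (hup : s ≤ y + √2 * y ^ 2 / 2) :
    |y / √s - (2 : ℝ) ^ ((1 : ℝ) / 4)| ≤ √2 / √s := by
  set A : ℝ := (2 : ℝ) ^ ((1 : ℝ) / 4)
  set r := √s
  have hA : 0 < A := by positivity
  have hr : 0 < r := sqrt_pos.mpr hs
  have hAr : (A * r) ^ 2 = √2 * s := by rw [mul_pow, two_rpow_quarter_sq, sq_sqrt hs.le]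
  have hsqrt2 : √2 ^ 2 = 2 := sq_sqrt zero_le_two
  have hle : y ≤ A * r := by
    rw [← pow_le_pow_iff_left₀ hy (by positivity) two_ne_zero, hAr]
    nlinarith [mul_le_mul_of_nonneg_left hlow (sqrt_nonneg 2)]
  have hgap : A * r - y ≤ √2 := by
    have hdiff : (A * r - y) * (A * r + y) ≤ √2 * (A * r + y) := by
      have := mul_le_mul_of_nonneg_left hup (sqrt_nonneg 2)
      nlinarith [mul_nonneg (sqrt_nonneg 2) (mul_pos hA hr).le]
    exact le_of_mul_le_mul_right hdiff (by positivity)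
  have hsplit : y / r - A = -((A * r - y) / r) := by field_simp; ring
  rw [hsplit, abs_neg, abs_of_nonneg (div_nonneg (by linarith) hr.le)]
  exact div_le_div_of_nonneg_right hgap hr.le

theorem stmt_4_general (f : ℝ → ℝ) (hf0 : f 0 = 0)
    (hf' : ∀ t : ℝ, HasDerivAt f (1 / Real.sqrt (1 + 2 * f t ^ 2)) t) :
    ∀ ε : ℝ, 0 < ε → ∃ M : ℝ, 0 < M ∧ ∀ t : ℝ, M ≤ |t| →
      |(|f t| / |t| ^ ((1 : ℝ) / 2)) - (2 : ℝ) ^ ((1 : ℝ) / 4)| < ε := by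
  intro ε hε
  refine ⟨2 / ε ^ 2 + 1, by positivity, fun t ht => ?_⟩
  have ht0 : 0 < |t| := lt_of_lt_of_le (by positivity) ht
  have hG : dualChangeInv |f t| = |t| := by
    rw [dualChangeInv_abs, dualChangeInv_comp_eq_self hf0 hf' t]
  have hsqrt : √2 < ε * √|t| :=
    calc √2 < √(ε ^ 2 * |t|) :=
          sqrt_lt_sqrt zero_le_two ((div_lt_iff₀' (by positivity)).mp (by linarith))
      _ = ε * √|t| := by rw [sqrt_mul (sq_nonneg ε), sqrt_sq hε.le]
  rw [← sqrt_eq_rpow]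
  calc _ ≤ √2 / √|t| := abs_div_sqrt_sub_two_rpow_quarter_le (abs_nonneg _) ht0
          (hG ▸ mul_sq_div_two_le_dualChangeInv (abs_nonneg _))
          (hG ▸ dualChangeInv_le (abs_nonneg _))
    _ < ε := by rwa [div_lt_iff₀ (sqrt_pos.mpr ht0)]

/-- `|f t| / |t|^(1/2) → 2^(1/4)` as `|t| → +∞`. -/
theorem stmt_4 (f : ℝ → ℝ) (hf0 : f 0 = 0)
    (hfodd : ∀ t : ℝ, f (-t) = -f t)
    (hf' : ∀ t : ℝ, HasDerivAt f (1 / Real.sqrt (1 + 2 * f t ^ 2)) t) :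
    ∀ ε : ℝ, 0 < ε → ∃ M : ℝ, 0 < M ∧ ∀ t : ℝ, M ≤ |t| →
      |(|f t| / |t| ^ ((1 : ℝ) / 2)) - (2 : ℝ) ^ ((1 : ℝ) / 4)| < ε :=
  stmt_4_general f hf0 hf'
end

section
/- For all t ∈ ℝ, one has f(t)²/2 ≤ t·f'(t)·f(t) ≤ f(t)². Consequently, for every t ≠ 0, 0 ≤ f(t)·f'(t)/t ≤ 1. -/
/-!
Since `0 < f' ≤ 1` and `f 0 = 0`, the mean value theorem gives `f t = m t` with `m ∈ [0, 1]`.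
The function `φ = f √(1 + 2 f²)` has `φ' = (1 + 4 f²) / (1 + 2 f²) ∈ [1, 2]` and `φ 0 = 0`, so
likewise `φ t = n t` with `n ∈ [1, 2]`. Then `t f' f = t f / √(1 + 2 f²) ≥ 0` and
`f² = n · t f / √(1 + 2 f²)`, which gives both bounds; and `f f' / t = m f' ∈ [0, 1]`.
-/

open Set

theorem exists_mem_Icc_sub_eq_mul_of_hasDerivAt {g g' : ℝ → ℝ} {a b : ℝ}
    (hg : ∀ x, HasDerivAt g (g' x) x) (hg' : ∀ x, g' x ∈ Icc a b) (x y : ℝ) :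
    ∃ m ∈ Icc a b, g y - g x = m * (y - x) := by
  have hcont : Continuous g := continuous_iff_continuousAt.2 fun x => (hg x).continuousAt
  have mvt : ∀ {u v : ℝ}, u < v → ∃ m ∈ Icc a b, g v - g u = m * (v - u) := fun {u v} huv => by
    obtain ⟨c, -, hc⟩ :=
      exists_hasDerivAt_eq_slope g g' huv hcont.continuousOn fun x _ => hg x
    exact ⟨g' c, hg' c, by rw [hc, div_mul_cancel₀ _ (sub_ne_zero.2 huv.ne')]⟩
  rcases lt_trichotomy x y with hxy | rfl | hyx
  · exact mvt hxy
  · exact ⟨g' x, hg' x, by ring⟩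
  · obtain ⟨m, hm, h⟩ := mvt hyx
    exact ⟨m, hm, by linarith⟩

theorem one_div_sqrt_one_add_two_mul_sq_mem_Icc (x : ℝ) :
    1 / √(1 + 2 * x ^ 2) ∈ Icc (0 : ℝ) 1 := by
  have h1 : 1 ≤ √(1 + 2 * x ^ 2) := Real.one_le_sqrt.2 (by nlinarith [sq_nonneg x])
  exact ⟨by positivity, (div_le_one (by linarith)).2 h1⟩

theorem one_add_four_mul_sq_div_mem_Icc (x : ℝ) :
    (1 + 4 * x ^ 2) / (1 + 2 * x ^ 2) ∈ Icc (1 : ℝ) 2 := by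
  have hpos : 0 < 1 + 2 * x ^ 2 := by positivity
  constructor
  · rw [le_div_iff₀ hpos]; nlinarith [sq_nonneg x]
  · rw [div_le_iff₀ hpos]; linarith

theorem HasDerivAt.mul_sqrt_one_add_two_mul_sq {f : ℝ → ℝ} {t : ℝ}
    (hf : HasDerivAt f (1 / √(1 + 2 * f t ^ 2)) t) :
    HasDerivAt (fun u => f u * √(1 + 2 * f u ^ 2))
      ((1 + 4 * f t ^ 2) / (1 + 2 * f t ^ 2)) t := by
  have hpos : 0 < 1 + 2 * f t ^ 2 := by positivity
  have hsq : √(1 + 2 * f t ^ 2) ^ 2 = 1 + 2 * f t ^ 2 := Real.sq_sqrt hpos.le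
  have hs : 0 < √(1 + 2 * f t ^ 2) := Real.sqrt_pos.2 hpos
  have hinner : HasDerivAt (fun u => 1 + 2 * f u ^ 2) (4 * f t / √(1 + 2 * f t ^ 2)) t :=
    (((hf.fun_pow 2).const_mul 2).const_add 1).congr_deriv (by norm_num; ring)
  refine (hf.mul (hinner.sqrt hpos.ne')).congr_deriv ?_
  field_simp
  rw [hsq]
  ring

theorem stmt_5_general (f : ℝ → ℝ) (hf0 : f 0 = 0)
    (hf' : ∀ t : ℝ, HasDerivAt f (1 / Real.sqrt (1 + 2 * f t ^ 2)) t) :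
    (∀ t : ℝ, f t ^ 2 / 2 ≤ t * deriv f t * f t ∧ t * deriv f t * f t ≤ f t ^ 2) ∧
    (∀ t : ℝ, t ≠ 0 → 0 ≤ f t * deriv f t / t ∧ f t * deriv f t / t ≤ 1) := by
  have hderiv : ∀ t, deriv f t = 1 / √(1 + 2 * f t ^ 2) := fun t => (hf' t).deriv
  have hf_slope : ∀ t, ∃ m ∈ Icc (0 : ℝ) 1, f t = m * t := fun t => by
    simpa [hf0] using exists_mem_Icc_sub_eq_mul_of_hasDerivAt hf'
      (fun x => one_div_sqrt_one_add_two_mul_sq_mem_Icc (f x)) 0 t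
  have hφ_slope : ∀ t, ∃ n ∈ Icc (1 : ℝ) 2, f t * √(1 + 2 * f t ^ 2) = n * t := fun t => by
    simpa [hf0] using exists_mem_Icc_sub_eq_mul_of_hasDerivAt
      (fun x => (hf' x).mul_sqrt_one_add_two_mul_sq)
      (fun x => one_add_four_mul_sq_div_mem_Icc (f x)) 0 t
  refine ⟨fun t => ?_, fun t ht => ?_⟩
  · obtain ⟨m, ⟨hm0, -⟩, hm⟩ := hf_slope t
    obtain ⟨n, ⟨hn1, hn2⟩, hn⟩ := hφ_slope t
    have hs : 0 < √(1 + 2 * f t ^ 2) := Real.sqrt_pos.2 (by positivity)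
    have htf : 0 ≤ t * f t / √(1 + 2 * f t ^ 2) :=
      div_nonneg (by rw [hm]; nlinarith [sq_nonneg t]) hs.le
    have hprod : t * deriv f t * f t = t * f t / √(1 + 2 * f t ^ 2) := by
      rw [hderiv]; ring
    have hfsq : f t ^ 2 = n * (t * f t / √(1 + 2 * f t ^ 2)) := by
      rw [mul_div_assoc', eq_div_iff hs.ne']
      linear_combination f t * hn
    rw [hprod]
    have hlower := mul_le_mul_of_nonneg_right hn1 htf
    have hupper := mul_le_mul_of_nonneg_right hn2 htf
    constructor <;> linarith
  · obtain ⟨m, ⟨hm0, hm1⟩, hm⟩ := hf_slope t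
    obtain ⟨hd0, hd1⟩ := one_div_sqrt_one_add_two_mul_sq_mem_Icc (f t)
    have hquot : f t * deriv f t / t = m * deriv f t := by
      rw [hm]; field_simp
    rw [hquot, hderiv]
    exact ⟨mul_nonneg hm0 hd0, mul_le_one₀ hm1 hd0 hd1⟩

/-- `f(t)²/2 ≤ t f'(t) f(t) ≤ f(t)²` for all `t`; consequently `0 ≤ f(t) f'(t) / t ≤ 1`
for all `t ≠ 0`. -/
theorem stmt_5 (f : ℝ → ℝ) (hf0 : f 0 = 0)
    (hfodd : ∀ t : ℝ, f (-t) = -f t)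
    (hf' : ∀ t : ℝ, HasDerivAt f (1 / Real.sqrt (1 + 2 * f t ^ 2)) t) :
    (∀ t : ℝ, f t ^ 2 / 2 ≤ t * deriv f t * f t ∧ t * deriv f t * f t ≤ f t ^ 2) ∧
    (∀ t : ℝ, t ≠ 0 → 0 ≤ f t * deriv f t / t ∧ f t * deriv f t / t ≤ 1) :=
  stmt_5_general f hf0 hf'
end

section
/- There exists a constant C > 0 such that |f(t)| ≥ C·|t| whenever |t| ≤ 1, and |f(t)| ≥ C·|t|^(1/2) whenever |t| ≥ 1. -/
/-!
Since `f' = (1 + 2 f²)^(-1/2)`, the function `H = f · √(1 + 2 f²)` has derivative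
`1 + 2 f² / (1 + 2 f²) ≥ 1` and vanishes at `0`, hence `|t| ≤ |H t|`, i.e.
`t² ≤ f² (1 + 2 f²)`. When `|f t| ≤ 1` this gives `|t| ≲ |f t|`, and when `|f t| ≥ 1` it gives
`|t| ≲ f²`; either way both lower bounds follow.
-/

open Real

lemma abs_le_abs_of_one_le_deriv {H : ℝ → ℝ} (hH : Differentiable ℝ H) (hH0 : H 0 = 0)
    (hH' : ∀ t, 1 ≤ deriv H t) (t : ℝ) : |t| ≤ |H t| := by
  rcases le_total 0 t with ht | ht
  · have := mul_sub_le_image_sub_of_le_deriv hH hH' ht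
    rw [abs_of_nonneg ht, abs_of_nonneg (by linarith)]
    linarith
  · have := mul_sub_le_image_sub_of_le_deriv hH hH' ht
    rw [abs_of_nonpos ht, abs_of_nonpos (by linarith)]
    linarith

lemma abs_le_three_mul_abs_of_sq_le {t y : ℝ} (h : t ^ 2 ≤ y ^ 2 * (1 + 2 * y ^ 2))
    (ht : |t| ≤ 1) : |t| ≤ 3 * |y| := by
  rcases le_total |y| 1 with hy | hy
  · have hy2 : y ^ 2 ≤ 1 := by nlinarith [sq_abs y, abs_nonneg y]
    exact abs_le_of_sq_le_sq (by nlinarith [sq_abs y]) (by positivity)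
  · linarith

lemma sqrt_abs_le_three_mul_abs_of_sq_le {t y : ℝ} (h : t ^ 2 ≤ y ^ 2 * (1 + 2 * y ^ 2))
    (ht : 1 ≤ |t|) : √|t| ≤ 3 * |y| := by
  rw [sqrt_le_left (by positivity)]
  have ht2 : |t| ≤ t ^ 2 := by nlinarith [sq_abs t]
  rcases le_total |y| 1 with hy | hy
  · have hy2 : y ^ 2 ≤ 1 := by nlinarith [sq_abs y, abs_nonneg y]
    nlinarith [sq_abs y]
  · nlinarith [sq_abs t, sq_abs y]

section ODE

variable {f : ℝ → ℝ} (hf' : ∀ t : ℝ, HasDerivAt f (1 / √(1 + 2 * f t ^ 2)) t)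
include hf'

lemma hasDerivAt_mul_sqrt_one_add_two_mul_sq (t : ℝ) :
    HasDerivAt (fun s => f s * √(1 + 2 * f s ^ 2)) (1 + 2 * f t ^ 2 / (1 + 2 * f t ^ 2)) t := by
  have hq : 0 < 1 + 2 * f t ^ 2 := by positivity
  have hs := (((hf' t).fun_pow 2).const_mul 2 |>.const_add 1).sqrt hq.ne'
  refine ((hf' t).fun_mul hs).congr_deriv ?_
  have hsqrt_pos := sqrt_pos.2 hq
  field_simp
  rw [sq_sqrt hq.le]
  ring

lemma sq_le_sq_mul_one_add_two_mul_sq (hf0 : f 0 = 0) (t : ℝ) :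
    t ^ 2 ≤ f t ^ 2 * (1 + 2 * f t ^ 2) := by
  have hH := hasDerivAt_mul_sqrt_one_add_two_mul_sq hf'
  have hH' (s : ℝ) : 1 ≤ deriv (fun s => f s * √(1 + 2 * f s ^ 2)) s := by
    rw [(hH s).deriv]
    exact le_add_of_nonneg_right (by positivity)
  have habs := abs_le_abs_of_one_le_deriv (fun s => (hH s).differentiableAt) (by simp [hf0]) hH' t
  calc t ^ 2 ≤ (f t * √(1 + 2 * f t ^ 2)) ^ 2 := sq_le_sq.mpr habs
    _ = f t ^ 2 * (1 + 2 * f t ^ 2) := by rw [mul_pow, sq_sqrt (by positivity)]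

end ODE

theorem stmt_6_general (f : ℝ → ℝ) (hf0 : f 0 = 0)
    (hf' : ∀ t : ℝ, HasDerivAt f (1 / Real.sqrt (1 + 2 * f t ^ 2)) t) :
    ∃ C : ℝ, 0 < C ∧
      (∀ t : ℝ, |t| ≤ 1 → C * |t| ≤ |f t|) ∧
      (∀ t : ℝ, 1 ≤ |t| → C * |t| ^ ((1 : ℝ) / 2) ≤ |f t|) := by
  have hsq := sq_le_sq_mul_one_add_two_mul_sq hf' hf0
  refine ⟨1 / 3, by norm_num, fun t ht => ?_, fun t ht => ?_⟩
  · linarith [abs_le_three_mul_abs_of_sq_le (hsq t) ht]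
  · rw [← sqrt_eq_rpow]
    linarith [sqrt_abs_le_three_mul_abs_of_sq_le (hsq t) ht]

/-- There is `C > 0` with `|f t| ≥ C |t|` for `|t| ≤ 1` and `|f t| ≥ C |t|^(1/2)` for `|t| ≥ 1`. -/
theorem stmt_6 (f : ℝ → ℝ) (hf0 : f 0 = 0)
    (hfodd : ∀ t : ℝ, f (-t) = -f t)
    (hf' : ∀ t : ℝ, HasDerivAt f (1 / Real.sqrt (1 + 2 * f t ^ 2)) t) :
    ∃ C : ℝ, 0 < C ∧
      (∀ t : ℝ, |t| ≤ 1 → C * |t| ≤ |f t|) ∧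
      (∀ t : ℝ, 1 ≤ |t| → C * |t| ^ ((1 : ℝ) / 2) ≤ |f t|) :=
  stmt_6_general f hf0 hf'
end

section
/- The function F̄ : ℝ → ℝ defined by F̄(t) = f(t)² − t·f(t)·f'(t) is nonnegative on ℝ, nondecreasing on [0, +∞), and nonincreasing on (−∞, 0]; in particular, |t| ≤ |s| implies F̄(t) ≤ F̄(s). -/
/-!
Write `φ = f' = (1 + 2 f²)^(-1/2)`; then `φ' = -2 f φ⁴`. The slope deficit `g = f - t φ` vanishes at
`0` and has `g' = 2 t f φ⁴ ≥ 0` for `t ≥ 0` (as `f` is increasing and odd), so `t f'(t) ≤ f(t)` there.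
Differentiating, `F̄' = φ g + 2 t f² φ⁴ ≥ 0` on `[0, ∞)`. Finally `F̄` is even, because `f` is odd
and `f'` even, and `F̄(0) = 0`; monotonicity on `[0, ∞)` therefore gives everything else.
-/

open Set

lemma monotoneOn_Ici_of_hasDerivAt_nonneg {F F' : ℝ → ℝ} {a : ℝ}
    (hF : ∀ x, HasDerivAt F (F' x) x) (hF' : ∀ x, a < x → 0 ≤ F' x) :
    MonotoneOn F (Ici a) :=
  monotoneOn_of_hasDerivWithinAt_nonneg (convex_Ici a)
    (fun x _ => (hF x).continuousAt.continuousWithinAt) (fun x _ => (hF x).hasDerivWithinAt)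
    (fun x hx => hF' x (by simpa using hx))

namespace Function.Even

variable {F : ℝ → ℝ}

lemma apply_abs (hF : F.Even) (t : ℝ) : F |t| = F t := by
  rcases abs_choice t with h | h <;> rw [h]
  exact hF t

lemma antitoneOn_Iic (hF : F.Even) (hmono : MonotoneOn F (Ici 0)) : AntitoneOn F (Iic 0) :=
  fun t ht s hs hts => by
    rw [← hF t, ← hF s]
    exact hmono (mem_Ici.2 (neg_nonneg.2 hs)) (mem_Ici.2 (neg_nonneg.2 ht)) (neg_le_neg hts)

lemma le_of_abs_le (hF : F.Even) (hmono : MonotoneOn F (Ici 0)) {t s : ℝ} (h : |t| ≤ |s|) :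
    F t ≤ F s := by
  rw [← hF.apply_abs t, ← hF.apply_abs s]
  exact hmono (abs_nonneg t) (abs_nonneg s) h

end Function.Even

lemma hasDerivAt_one_div_sqrt_one_add_two_sq (x : ℝ) :
    HasDerivAt (fun y : ℝ => 1 / √(1 + 2 * y ^ 2)) (-2 * x * (1 / √(1 + 2 * x ^ 2)) ^ 3) x := by
  have hpos : 0 < 1 + 2 * x ^ 2 := by positivity
  have hsqrt : 0 < √(1 + 2 * x ^ 2) := Real.sqrt_pos.2 hpos
  have h := ((((hasDerivAt_pow 2 x).const_mul 2).const_add 1).sqrt hpos.ne').inv hsqrt.ne'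
  simp only [one_div]
  refine h.congr_deriv ?_
  field_simp
  ring

def IsDualChange (f : ℝ → ℝ) : Prop :=
  ∀ t, HasDerivAt f (1 / √(1 + 2 * f t ^ 2)) t

noncomputable def fBar (f : ℝ → ℝ) (t : ℝ) : ℝ :=
  f t ^ 2 - t * f t * deriv f t

namespace IsDualChange

variable {f : ℝ → ℝ}

lemma deriv_eq (hf : IsDualChange f) (t : ℝ) : deriv f t = 1 / √(1 + 2 * f t ^ 2) :=
  (hf t).deriv

lemma hasDerivAt (hf : IsDualChange f) (t : ℝ) : HasDerivAt f (deriv f t) t :=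
  hf.deriv_eq t ▸ hf t

lemma deriv_pos (hf : IsDualChange f) (t : ℝ) : 0 < deriv f t := by
  rw [hf.deriv_eq]
  positivity

lemma hasDerivAt_deriv (hf : IsDualChange f) (t : ℝ) :
    HasDerivAt (deriv f) (-2 * f t * deriv f t ^ 4) t := by
  rw [show deriv f = (fun y => 1 / √(1 + 2 * y ^ 2)) ∘ f from funext hf.deriv_eq]
  refine ((hasDerivAt_one_div_sqrt_one_add_two_sq (f t)).comp t (hf t)).congr_deriv ?_
  simp only [Function.comp_apply]
  ring

lemma deriv_even (hf : IsDualChange f) (hodd : f.Odd) : (deriv f).Even := fun t => by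
  rw [hf.deriv_eq, hf.deriv_eq, hodd t, neg_sq]

lemma nonneg (hf : IsDualChange f) (hodd : f.Odd) {t : ℝ} (ht : 0 ≤ t) : 0 ≤ f t :=
  hodd.map_zero ▸ monotone_of_hasDerivAt_nonneg hf.hasDerivAt (fun x => (hf.deriv_pos x).le) ht

lemma mul_deriv_le (hf : IsDualChange f) (hodd : f.Odd) {t : ℝ} (ht : 0 ≤ t) :
    t * deriv f t ≤ f t := by
  have hderiv (x : ℝ) : HasDerivAt (fun u => f u - u * deriv f u) (2 * x * f x * deriv f x ^ 4) x :=
    ((hf.hasDerivAt x).sub ((hasDerivAt_id x).mul (hf.hasDerivAt_deriv x))).congr_deriv (by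
      simp only [id]; ring)
  have hmono := monotoneOn_Ici_of_hasDerivAt_nonneg hderiv fun x hx => by
    have := hf.nonneg hodd hx.le
    positivity
  simpa [hodd.map_zero] using hmono self_mem_Ici (mem_Ici.2 ht) ht

lemma monotoneOn_fBar (hf : IsDualChange f) (hodd : f.Odd) : MonotoneOn (fBar f) (Ici 0) := by
  have hderiv (x : ℝ) : HasDerivAt (fBar f)
      (deriv f x * (f x - x * deriv f x) + 2 * x * f x ^ 2 * deriv f x ^ 4) x :=
    (((hf.hasDerivAt x).pow 2).sub
      (((hasDerivAt_id x).mul (hf.hasDerivAt x)).mul (hf.hasDerivAt_deriv x))).congr_deriv (by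
        simp only [id, Pi.mul_apply]; ring)
  refine monotoneOn_Ici_of_hasDerivAt_nonneg hderiv fun x hx => ?_
  have := sub_nonneg.2 (hf.mul_deriv_le hodd hx.le)
  have := (hf.deriv_pos x).le
  positivity

lemma fBar_even (hf : IsDualChange f) (hodd : f.Odd) : (fBar f).Even := fun t => by
  simp only [fBar, hodd t, hf.deriv_even hodd t]
  ring

end IsDualChange

theorem stmt_9_general (f : ℝ → ℝ)
    (hfodd : ∀ t : ℝ, f (-t) = -f t)
    (hf' : ∀ t : ℝ, HasDerivAt f (1 / Real.sqrt (1 + 2 * f t ^ 2)) t) :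
    (∀ t : ℝ, 0 ≤ f t ^ 2 - t * f t * deriv f t) ∧
    MonotoneOn (fun t => f t ^ 2 - t * f t * deriv f t) (Set.Ici (0 : ℝ)) ∧
    AntitoneOn (fun t => f t ^ 2 - t * f t * deriv f t) (Set.Iic (0 : ℝ)) ∧
    (∀ t s : ℝ, |t| ≤ |s| →
      f t ^ 2 - t * f t * deriv f t ≤ f s ^ 2 - s * f s * deriv f s) := by
  have hmono : MonotoneOn (fBar f) (Ici 0) := IsDualChange.monotoneOn_fBar hf' hfodd
  have heven : (fBar f).Even := IsDualChange.fBar_even hf' hfodd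
  have hzero : fBar f 0 = 0 := by simp [fBar, Function.Odd.map_zero hfodd]
  refine ⟨fun t => ?_, hmono, heven.antitoneOn_Iic hmono, fun t s => heven.le_of_abs_le hmono⟩
  exact hzero ▸ heven.le_of_abs_le hmono (t := 0) (by simp)

/-- `F̄(t) = f(t)² − t f(t) f'(t)` is nonnegative, nondecreasing on `[0,∞)`,
nonincreasing on `(−∞,0]`, and `|t| ≤ |s|` implies `F̄(t) ≤ F̄(s)`. -/
theorem stmt_9 (f : ℝ → ℝ) (hf0 : f 0 = 0)
    (hfodd : ∀ t : ℝ, f (-t) = -f t)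
    (hf' : ∀ t : ℝ, HasDerivAt f (1 / Real.sqrt (1 + 2 * f t ^ 2)) t) :
    (∀ t : ℝ, 0 ≤ f t ^ 2 - t * f t * deriv f t) ∧
    MonotoneOn (fun t => f t ^ 2 - t * f t * deriv f t) (Set.Ici (0 : ℝ)) ∧
    AntitoneOn (fun t => f t ^ 2 - t * f t * deriv f t) (Set.Iic (0 : ℝ)) ∧
    (∀ t s : ℝ, |t| ≤ |s| →
      f t ^ 2 - t * f t * deriv f t ≤ f s ^ 2 - s * f s * deriv f s) :=
  stmt_9_general f hfodd hf'
end

section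
/- The function F̿ : ℝ → ℝ defined by F̿(t) = t·f(t)·f'(t) − f(t)²/2 is nonnegative on ℝ, nondecreasing on [0, +∞), and nonincreasing on (−∞, 0]; in particular, |t| ≤ |s| implies F̿(t) ≤ F̿(s). -/
/-!
Write `w = 1 + 2 f²`. The equation gives `f' = w^(-1/2)` and `f'' = -2 f / w²`, so
`F̿' = f f' + t f'² + t f f'' - f f' = t (1/w - 2 f²/w²) = t / w²`, which has the sign of `t`.
Thus `F̿` is nondecreasing on `[0, ∞)`. It is even, since `f` is odd and `f'` is even, so
`F̿(t) = F̿(|t|) ≤ F̿(|s|) = F̿(s)` whenever `|t| ≤ |s|`; the other claims are special cases,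
using `F̿(0) = 0` for nonnegativity.
-/

open Set

theorem Function.Even.le_of_abs_le_s10 {α β : Type*} [AddCommGroup α] [LinearOrder α]
    [IsOrderedAddMonoid α] [Preorder β] {g : α → β} (he : g.Even) (hg : MonotoneOn g (Ici 0))
    {t s : α} (h : |t| ≤ |s|) : g t ≤ g s := by
  have hg_abs : ∀ x, g |x| = g x := fun x => by
    rcases abs_choice x with hx | hx <;> simp only [hx, he x]
  calc g t = g |t| := (hg_abs t).symm
    _ ≤ g |s| := hg (abs_nonneg t) (abs_nonneg s) h
    _ = g s := hg_abs s

theorem Function.Even.antitoneOn_Iic_s10 {α β : Type*} [AddCommGroup α] [LinearOrder α]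
    [IsOrderedAddMonoid α] [Preorder β] {g : α → β} (he : g.Even) (hg : MonotoneOn g (Ici 0)) :
    AntitoneOn g (Iic 0) := fun a ha b hb hab =>
  he.le_of_abs_le_s10 hg <| by
    rw [abs_of_nonpos ha, abs_of_nonpos hb]
    exact neg_le_neg hab

theorem monotoneOn_Ici_of_hasDerivAt {g g' : ℝ → ℝ} (hg : ∀ t, HasDerivAt g (g' t) t)
    (hg' : ∀ t, 0 < t → 0 ≤ g' t) : MonotoneOn g (Ici 0) :=
  monotoneOn_of_hasDerivWithinAt_nonneg (convex_Ici 0)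
    (fun t _ => (hg t).continuousAt.continuousWithinAt) (fun t _ => (hg t).hasDerivWithinAt)
    (fun t ht => hg' t (by rwa [interior_Ici] at ht))

section DualChangeOfVariables

variable {f : ℝ → ℝ}

def IsDualChangeOfVariables (f : ℝ → ℝ) : Prop :=
  ∀ t, HasDerivAt f (1 / Real.sqrt (1 + 2 * f t ^ 2)) t

/-- The paper's `F̿`. -/
noncomputable def dualPotential (f : ℝ → ℝ) (t : ℝ) : ℝ :=
  t * f t * deriv f t - f t ^ 2 / 2

theorem IsDualChangeOfVariables.hasDerivAt_deriv (hf : IsDualChangeOfVariables f) (t : ℝ) :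
    HasDerivAt (deriv f) (-2 * f t / (1 + 2 * f t ^ 2) ^ 2) t := by
  have hw : 0 < 1 + 2 * f t ^ 2 := by positivity
  have hs : Real.sqrt (1 + 2 * f t ^ 2) ^ 2 = 1 + 2 * f t ^ 2 := Real.sq_sqrt hw.le
  have hs0 : Real.sqrt (1 + 2 * f t ^ 2) ≠ 0 := (Real.sqrt_pos.mpr hw).ne'
  have hderiv : deriv f = (fun x => Real.sqrt (1 + 2 * f x ^ 2))⁻¹ := by
    funext x
    rw [(hf x).deriv, one_div, Pi.inv_apply]
  rw [hderiv]
  refine ((((((hf t).pow 2).const_mul 2).const_add 1).sqrt hw.ne').inv hs0).congr_deriv ?_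
  generalize Real.sqrt (1 + 2 * f t ^ 2) = s at hs hs0 ⊢
  rw [← hs]
  field_simp
  ring

theorem IsDualChangeOfVariables.hasDerivAt_dualPotential (hf : IsDualChangeOfVariables f)
    (t : ℝ) :
    HasDerivAt (dualPotential f) (t / (1 + 2 * f t ^ 2) ^ 2) t := by
  have hw : 0 < 1 + 2 * f t ^ 2 := by positivity
  have hs : Real.sqrt (1 + 2 * f t ^ 2) ^ 2 = 1 + 2 * f t ^ 2 := Real.sq_sqrt hw.le
  have hs0 : Real.sqrt (1 + 2 * f t ^ 2) ≠ 0 := (Real.sqrt_pos.mpr hw).ne'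
  refine ((((hasDerivAt_id' t).mul (hf t)).mul (hf.hasDerivAt_deriv t)).sub
    (((hf t).pow 2).div_const 2)).congr_deriv ?_
  rw [(hf t).deriv]
  generalize Real.sqrt (1 + 2 * f t ^ 2) = s at hs hs0 ⊢
  simp only [Pi.mul_apply]
  rw [← hs]
  field_simp
  linear_combination 2 * t * hs

theorem IsDualChangeOfVariables.dualPotential_even (hf : IsDualChangeOfVariables f)
    (hfodd : f.Odd) :
    (dualPotential f).Even := fun t => by
  simp only [dualPotential, (hf _).deriv, hfodd t, neg_sq]
  ring

end DualChangeOfVariables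

theorem stmt_10_general (f : ℝ → ℝ)
    (hfodd : ∀ t : ℝ, f (-t) = -f t)
    (hf' : ∀ t : ℝ, HasDerivAt f (1 / Real.sqrt (1 + 2 * f t ^ 2)) t) :
    (∀ t : ℝ, 0 ≤ t * f t * deriv f t - f t ^ 2 / 2) ∧
    MonotoneOn (fun t => t * f t * deriv f t - f t ^ 2 / 2) (Set.Ici (0 : ℝ)) ∧
    AntitoneOn (fun t => t * f t * deriv f t - f t ^ 2 / 2) (Set.Iic (0 : ℝ)) ∧
    (∀ t s : ℝ, |t| ≤ |s| →
      t * f t * deriv f t - f t ^ 2 / 2 ≤ s * f s * deriv f s - f s ^ 2 / 2) := by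
  have hf : IsDualChangeOfVariables f := hf'
  have heven : (dualPotential f).Even := hf.dualPotential_even hfodd
  have hmono : MonotoneOn (dualPotential f) (Ici 0) :=
    monotoneOn_Ici_of_hasDerivAt hf.hasDerivAt_dualPotential fun t ht => by positivity
  have hzero : dualPotential f 0 = 0 := by
    simp [dualPotential, Function.Odd.map_zero hfodd]
  refine ⟨fun t => ?_, hmono, heven.antitoneOn_Iic_s10 hmono, fun t s => heven.le_of_abs_le_s10 hmono⟩
  calc 0 = dualPotential f 0 := hzero.symm
    _ ≤ dualPotential f t := heven.le_of_abs_le_s10 hmono (by simp)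

/-- `F̿(t) = t f(t) f'(t) − f(t)²/2` is nonnegative, nondecreasing on `[0,∞)`,
nonincreasing on `(−∞,0]`, and `|t| ≤ |s|` implies `F̿(t) ≤ F̿(s)`. -/
theorem stmt_10 (f : ℝ → ℝ) (hf0 : f 0 = 0)
    (hfodd : ∀ t : ℝ, f (-t) = -f t)
    (hf' : ∀ t : ℝ, HasDerivAt f (1 / Real.sqrt (1 + 2 * f t ^ 2)) t) :
    (∀ t : ℝ, 0 ≤ t * f t * deriv f t - f t ^ 2 / 2) ∧
    MonotoneOn (fun t => t * f t * deriv f t - f t ^ 2 / 2) (Set.Ici (0 : ℝ)) ∧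
    AntitoneOn (fun t => t * f t * deriv f t - f t ^ 2 / 2) (Set.Iic (0 : ℝ)) ∧
    (∀ t s : ℝ, |t| ≤ |s| →
      t * f t * deriv f t - f t ^ 2 / 2 ≤ s * f s * deriv f s - f s ^ 2 / 2) :=
  stmt_10_general f hfodd hf'
end

section
/- As |s| → +∞, f(s)²/s² → 0 and f(s)⁴/s² → 2; that is, for every ε > 0 there exists M > 0 such that |s| ≥ M implies f(s)²/s² < ε and |f(s)⁴/s² − 2| < ε. -/
/-!
The inverse of `f` is `G y = ∫₀^y √(1 + 2u²) du` (`dualChangeInverse`), since `(G ∘ f)' = 1`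
and `G (f 0) = 0`. Squeezing the integrand between `√2 u` and `1 + √2 u` gives
`G y ~ (√2 / 2) y²` as `y → ∞`, and `f → ∞`, so `f s² / |s| → √2` as `|s| → ∞` (using that `f`
is odd). Dividing once more by `|s|`, resp. squaring, gives the two limits.
-/

open Real Filter Topology intervalIntegral

noncomputable def dualChangeInverse (y : ℝ) : ℝ := ∫ u in (0 : ℝ)..y, √(1 + 2 * u ^ 2)

theorem continuous_sqrt_one_add_two_mul_sq : Continuous fun u : ℝ => √(1 + 2 * u ^ 2) := by
  fun_prop

theorem dualChangeInverse_zero : dualChangeInverse 0 = 0 := integral_same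

theorem hasDerivAt_dualChangeInverse (y : ℝ) :
    HasDerivAt dualChangeInverse (√(1 + 2 * y ^ 2)) y :=
  integral_hasDerivAt_right (continuous_sqrt_one_add_two_mul_sq.intervalIntegrable 0 y)
    continuous_sqrt_one_add_two_mul_sq.aestronglyMeasurable.stronglyMeasurableAtFilter
    continuous_sqrt_one_add_two_mul_sq.continuousAt

theorem strictMono_dualChangeInverse : StrictMono dualChangeInverse :=
  strictMono_of_hasDerivAt_pos hasDerivAt_dualChangeInverse fun _ => by positivity

theorem leftInverse_dualChangeInverse {f : ℝ → ℝ} (hf0 : f 0 = 0)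
    (hf' : ∀ t : ℝ, HasDerivAt f (1 / √(1 + 2 * f t ^ 2)) t) :
    Function.LeftInverse dualChangeInverse f := by
  intro t
  have hderiv (x : ℝ) : HasDerivAt (fun u => dualChangeInverse (f u) - u) 0 x := by
    have hpos : 0 < √(1 + 2 * f x ^ 2) := by positivity
    have h := ((hasDerivAt_dualChangeInverse (f x)).comp x (hf' x)).sub (hasDerivAt_id' x)
    rwa [mul_one_div_cancel hpos.ne', sub_self] at h
  have hconst := is_const_of_deriv_eq_zero (fun x => (hderiv x).differentiableAt)
    (fun x => (hderiv x).deriv) t 0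
  simp only [hf0, dualChangeInverse_zero, sub_zero] at hconst
  linarith

theorem le_dualChangeInverse {y : ℝ} (hy : 0 ≤ y) : √2 / 2 * y ^ 2 ≤ dualChangeInverse y := by
  have hle (u : ℝ) (hu : u ∈ Set.Icc 0 y) : √2 * u ≤ √(1 + 2 * u ^ 2) := by
    rw [← sqrt_sq hu.1, ← sqrt_mul zero_le_two, sqrt_sq hu.1]
    exact sqrt_le_sqrt (by linarith)
  calc √2 / 2 * y ^ 2 = ∫ u in (0 : ℝ)..y, √2 * u := by
        rw [integral_const_mul, integral_id]; ring
    _ ≤ dualChangeInverse y :=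
        integral_mono_on hy ((by fun_prop : Continuous _).intervalIntegrable _ _)
          (continuous_sqrt_one_add_two_mul_sq.intervalIntegrable _ _) hle

theorem dualChangeInverse_le {y : ℝ} (hy : 0 ≤ y) : dualChangeInverse y ≤ y + √2 / 2 * y ^ 2 := by
  have hle (u : ℝ) (hu : u ∈ Set.Icc 0 y) : √(1 + 2 * u ^ 2) ≤ 1 + √2 * u := by
    have hu0 : 0 ≤ √2 * u := mul_nonneg (sqrt_nonneg 2) hu.1
    rw [sqrt_le_left (by positivity), add_sq, mul_pow, sq_sqrt zero_le_two]
    linarith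
  calc dualChangeInverse y ≤ ∫ u in (0 : ℝ)..y, (1 + √2 * u) :=
        integral_mono_on hy (continuous_sqrt_one_add_two_mul_sq.intervalIntegrable _ _)
          ((by fun_prop : Continuous _).intervalIntegrable _ _) hle
    _ = y + √2 / 2 * y ^ 2 := by
        rw [integral_add intervalIntegrable_const
          ((by fun_prop : Continuous _).intervalIntegrable _ _), integral_const_mul, integral_id]
        simp only [integral_const, sub_zero, smul_eq_mul, mul_one]
        ring

theorem tendsto_dualChangeInverse_div_sq :
    Tendsto (fun y => dualChangeInverse y / y ^ 2) atTop (𝓝 (√2 / 2)) := by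
  have hupper : Tendsto (fun y : ℝ => y⁻¹ + √2 / 2) atTop (𝓝 (√2 / 2)) := by
    simpa using tendsto_inv_atTop_zero.add_const (√2 / 2)
  refine tendsto_of_tendsto_of_tendsto_of_le_of_le' tendsto_const_nhds hupper ?_ ?_
  · filter_upwards [eventually_gt_atTop 0] with y hy
    rw [le_div_iff₀ (by positivity)]
    exact le_dualChangeInverse hy.le
  · filter_upwards [eventually_gt_atTop 0] with y hy
    rw [div_le_iff₀ (by positivity)]
    calc dualChangeInverse y ≤ y + √2 / 2 * y ^ 2 := dualChangeInverse_le hy.le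
      _ = (y⁻¹ + √2 / 2) * y ^ 2 := by field_simp

theorem tendsto_atTop_atTop_of_leftInverse {f : ℝ → ℝ}
    (hf : Function.LeftInverse dualChangeInverse f) :
    Tendsto f atTop atTop :=
  (strictMono_dualChangeInverse.orderIsoOfRightInverse _ f hf).symm.tendsto_atTop

theorem tendsto_apply_sq_div_self {f : ℝ → ℝ} (hf0 : f 0 = 0)
    (hf' : ∀ t : ℝ, HasDerivAt f (1 / √(1 + 2 * f t ^ 2)) t) :
    Tendsto (fun s => f s ^ 2 / s) atTop (𝓝 √2) := by
  have hG := leftInverse_dualChangeInverse hf0 hf'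
  have h := (tendsto_dualChangeInverse_div_sq.comp (tendsto_atTop_atTop_of_leftInverse hG)).inv₀
    (by positivity)
  have hsqrt : (√2 / 2)⁻¹ = √2 := by
    field_simp
    rw [sq_sqrt zero_le_two]
  rw [hsqrt] at h
  exact h.congr fun s => by simp [hG s]

theorem sq_apply_abs_of_odd {f : ℝ → ℝ} (hodd : ∀ t, f (-t) = -f t) (s : ℝ) :
    f |s| ^ 2 = f s ^ 2 := by
  rcases abs_choice s with h | h <;> simp [h, hodd]

/-- As `|s| → +∞`, `f(s)²/s² → 0` and `f(s)⁴/s² → 2`. -/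
theorem stmt_12 (f : ℝ → ℝ) (hf0 : f 0 = 0)
    (hfodd : ∀ t : ℝ, f (-t) = -f t)
    (hf' : ∀ t : ℝ, HasDerivAt f (1 / Real.sqrt (1 + 2 * f t ^ 2)) t) :
    ∀ ε : ℝ, 0 < ε → ∃ M : ℝ, 0 < M ∧ ∀ s : ℝ, M ≤ |s| →
      f s ^ 2 / s ^ 2 < ε ∧ |f s ^ 4 / s ^ 2 - 2| < ε := by
  intro ε hε
  have hq : Tendsto (fun s => f s ^ 2 / |s|) (comap abs atTop) (𝓝 √2) :=
    ((tendsto_apply_sq_div_self hf0 hf').comp tendsto_comap).congr fun s => by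
      simp [sq_apply_abs_of_odd hfodd]
  have h0 : Tendsto (fun s => f s ^ 2 / s ^ 2) (comap abs atTop) (𝓝 0) := by
    have h := hq.mul (tendsto_inv_atTop_zero.comp tendsto_comap)
    rw [mul_zero] at h
    refine h.congr fun s => ?_
    rw [Function.comp_apply, ← div_eq_mul_inv, div_div, ← sq, sq_abs]
  have h2 : Tendsto (fun s => f s ^ 4 / s ^ 2) (comap abs atTop) (𝓝 2) := by
    have h := hq.pow 2
    rw [sq_sqrt zero_le_two] at h
    refine h.congr fun s => ?_
    rw [div_pow, ← pow_mul, sq_abs]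
  obtain ⟨M, hM1, hM⟩ := ((atTop_basis' 1).comap abs).eventually_iff.mp
    ((h0.eventually (gt_mem_nhds hε)).and (Metric.tendsto_nhds.mp h2 ε hε))
  exact ⟨M, by linarith, fun s hs => hM hs⟩
end

section
/- Let G : ℝ → ℝ satisfy lim_{|t|→+∞} G(t)/t⁴ = +∞ (i.e., for every A > 0 there exists M > 0 such that |t| ≥ M implies G(t)/t⁴ ≥ A). Then lim_{|s|→+∞} G(f(s))/s² = +∞, i.e., for every A > 0 there exists M' > 0 such that |s| ≥ M' implies G(f(s))/s² ≥ A. -/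
/-!
Since `f' = (1 + 2 f²)^(-1/2)` and `(1 + 2f)² ≥ 1 + 2f²` for `f ≥ 0`, the function `f + f²` has
derivative at least `1` on `[0, ∞)`, so `|s| ≤ |f s| + f(s)² ≤ 2 f(s)²` once `|f s| ≥ 1`. Hence
`s² ≤ 4 f(s)⁴`, and the quartic growth of `G` at `f s` dominates `s²`.
-/

def SuperPowGrowth (G : ℝ → ℝ) (n : ℕ) : Prop :=
  ∀ A : ℝ, 0 < A → ∃ M : ℝ, 0 < M ∧ ∀ t : ℝ, M ≤ |t| → A ≤ G t / t ^ n

theorem SuperPowGrowth.comp_of_abs_le_add_sq {G φ : ℝ → ℝ} (hG : SuperPowGrowth G 4)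
    (hφ : ∀ s, |s| ≤ |φ s| + |φ s| ^ 2) : SuperPowGrowth (G ∘ φ) 2 := by
  intro A hA
  obtain ⟨M, -, hM⟩ := hG (4 * A) (by positivity)
  set c := max M 1
  have hc : 1 ≤ c := le_max_right M 1
  refine ⟨c + c ^ 2, by positivity, fun s hs => ?_⟩
  set u := |φ s|
  have hcu : c ≤ u := by
    by_contra! h
    nlinarith [hφ s, abs_nonneg (φ s)]
  have hs_sq : s ^ 2 ≤ 4 * φ s ^ 4 := by
    have hsu : |s| ≤ 2 * u ^ 2 := by nlinarith [hφ s]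
    calc s ^ 2 = |s| ^ 2 := (sq_abs s).symm
      _ ≤ (2 * u ^ 2) ^ 2 := pow_le_pow_left₀ (abs_nonneg s) hsu 2
      _ = 4 * φ s ^ 4 := by rw [mul_pow, ← pow_mul, Even.pow_abs ⟨2, rfl⟩]; norm_num
  have hφ4 : 0 < φ s ^ 4 := by
    have : φ s ≠ 0 := abs_pos.1 (by linarith)
    positivity
  have hGφ : 4 * A * φ s ^ 4 ≤ G (φ s) :=
    (le_div_iff₀ hφ4).1 (hM (φ s) (le_trans (le_max_left M 1) hcu))
  have hs0 : 0 < s ^ 2 := by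
    have : s ≠ 0 := abs_pos.1 (lt_of_lt_of_le (by positivity) hs)
    positivity
  rw [Function.comp_apply, le_div_iff₀ hs0]
  nlinarith

theorem one_le_one_add_two_mul_div_sqrt {x : ℝ} (hx : 0 ≤ x) :
    1 ≤ (1 + 2 * x) / Real.sqrt (1 + 2 * x ^ 2) := by
  have hpos : 0 < Real.sqrt (1 + 2 * x ^ 2) := Real.sqrt_pos.2 (by positivity)
  rw [one_le_div hpos, Real.sqrt_le_left (by positivity)]
  nlinarith

section

variable {f : ℝ → ℝ} (hf' : ∀ t : ℝ, HasDerivAt f (1 / Real.sqrt (1 + 2 * f t ^ 2)) t)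
include hf'

theorem strictMono_of_hasDerivAt_inv_sqrt : StrictMono f :=
  strictMono_of_hasDerivAt_pos hf' fun t => by positivity

theorem le_add_sq_of_hasDerivAt_inv_sqrt (hf0 : f 0 = 0) {s : ℝ} (hs : 0 ≤ s) :
    s ≤ f s + f s ^ 2 := by
  have hf_nonneg : ∀ t, 0 ≤ t → 0 ≤ f t := fun t ht =>
    hf0 ▸ (strictMono_of_hasDerivAt_inv_sqrt hf').monotone ht
  have hg' : ∀ t, HasDerivAt (fun t => f t + f t ^ 2 - t)
      ((1 + 2 * f t) / Real.sqrt (1 + 2 * f t ^ 2) - 1) t := fun t =>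
    (((hf' t).fun_add ((hf' t).fun_pow 2)).fun_sub (hasDerivAt_id' t)).congr_deriv (by
      norm_num
      ring)
  have hg_mono : MonotoneOn (fun t => f t + f t ^ 2 - t) (Set.Ici 0) := by
    refine monotoneOn_of_hasDerivWithinAt_nonneg (convex_Ici 0)
      (fun t _ => (hg' t).continuousAt.continuousWithinAt)
      (fun t _ => (hg' t).hasDerivWithinAt) fun t ht => ?_
    rw [interior_Ici] at ht
    exact sub_nonneg.2 (one_le_one_add_two_mul_div_sqrt (hf_nonneg t (le_of_lt ht)))
  have := hg_mono Set.self_mem_Ici (Set.mem_Ici.2 hs) hs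
  simp only [hf0] at this
  linarith

end

/-- If `G(t)/t⁴ → +∞` as `|t| → +∞`, then `G(f(s))/s² → +∞` as `|s| → +∞`. -/
theorem stmt_13 (f : ℝ → ℝ) (hf0 : f 0 = 0)
    (hfodd : ∀ t : ℝ, f (-t) = -f t)
    (hf' : ∀ t : ℝ, HasDerivAt f (1 / Real.sqrt (1 + 2 * f t ^ 2)) t)
    (G : ℝ → ℝ)
    (hG : ∀ A : ℝ, 0 < A → ∃ M : ℝ, 0 < M ∧ ∀ t : ℝ, M ≤ |t| → A ≤ G t / t ^ 4) :
    ∀ A : ℝ, 0 < A → ∃ M' : ℝ, 0 < M' ∧ ∀ s : ℝ, M' ≤ |s| → A ≤ G (f s) / s ^ 2 := by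
  have hf_abs : ∀ s, |f s| = f |s| := fun s => by
    have hmono := (strictMono_of_hasDerivAt_inv_sqrt hf').monotone
    rcases le_or_gt 0 s with hs | hs
    · rw [abs_of_nonneg hs, abs_of_nonneg (hf0 ▸ hmono hs)]
    · rw [abs_of_neg hs, hfodd, abs_of_nonpos (hf0 ▸ hmono hs.le)]
  refine SuperPowGrowth.comp_of_abs_le_add_sq hG fun s => ?_
  rw [hf_abs]
  exact le_add_sq_of_hasDerivAt_inv_sqrt hf' hf0 (abs_nonneg s)
end

section
/- There exists a constant C > 0 such that for every measurable function v : ℝ³ → ℝ with finite L⁶ norm ‖v‖_{L⁶} and with f∘v having finite L² norm ‖f∘v‖_{L²} (with respect to Lebesgue measure on ℝ³), one has ‖v‖_{L²} ≤ C·(‖v‖_{L⁶} + ‖f∘v‖_{L²}² + ‖f∘v‖_{L²}). -/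
/-!
The function `g t = f t * √(1 + 2 f(t)²) - t` has derivative `2 f² / (1 + 2 f²) ≥ 0`
(because `f' √(1 + 2 f²) = 1`) and vanishes at `0`, so `|t| ≤ |f t| √(1 + 2 f(t)²) ≤ |f t| + 2 f(t)²`.
Consequently `|v| ≤ 3 |f ∘ v|` where `|v| ≤ 1` and `|v| ≤ 5 (f ∘ v)²` where `|v| > 1`.
The first piece of `v` is bounded in `L²` by `‖f ∘ v‖₂`, the second in `L¹` by `‖f ∘ v‖₂²`,
and by Hölder the `L²` norm of the second piece is at most the sum of its `L¹` and `L⁶` norms.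
-/

open MeasureTheory

theorem sqrt_one_add_two_mul_sq_le (x : ℝ) : Real.sqrt (1 + 2 * x ^ 2) ≤ 1 + 2 * |x| :=
  (Real.sqrt_le_left (by positivity)).2 (by nlinarith [sq_abs x, abs_nonneg x])

theorem abs_le_three_mul_abs_of_abs_le_one {t y : ℝ} (h : |t| ≤ |y| + 2 * y ^ 2) (ht : |t| ≤ 1) :
    |t| ≤ 3 * |y| := by
  rw [← sq_abs y] at h
  rcases le_or_gt |y| 1 with hy | hy <;> nlinarith [abs_nonneg y]

theorem abs_le_five_mul_sq_of_one_lt_abs {t y : ℝ} (h : |t| ≤ |y| + 2 * y ^ 2) (ht : 1 < |t|) :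
    |t| ≤ 5 * y ^ 2 := by
  rw [← sq_abs y] at h ⊢
  rcases lt_or_ge |y| (1 / 3) with hy | hy <;> nlinarith [abs_nonneg y]

section DualChange

variable {f : ℝ → ℝ} (hf' : ∀ t, HasDerivAt f (1 / Real.sqrt (1 + 2 * f t ^ 2)) t)
include hf'

theorem monotone_mul_sqrt_sub_id :
    Monotone fun t => f t * Real.sqrt (1 + 2 * f t ^ 2) - t := by
  refine monotone_of_hasDerivAt_nonneg (f' := fun t => 2 * f t ^ 2 / (1 + 2 * f t ^ 2))
    (fun t => ?_) fun t => by positivity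
  have hpos : 0 < 1 + 2 * f t ^ 2 := by positivity
  have hd : HasDerivAt (fun s => f s * Real.sqrt (1 + 2 * f s ^ 2) - s) _ t :=
    ((hf' t).mul (((hf' t).pow 2).const_mul 2 |>.const_add 1 |>.sqrt hpos.ne')).sub
      (hasDerivAt_id t)
  refine hd.congr_deriv ?_
  simp only [Pi.pow_apply]
  field_simp
  rw [Real.sq_sqrt hpos.le]
  ring

theorem abs_le_abs_mul_sqrt (hf0 : f 0 = 0) (t : ℝ) :
    |t| ≤ |f t| * Real.sqrt (1 + 2 * f t ^ 2) := by
  have hmono := monotone_mul_sqrt_sub_id hf'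
  have hS : 0 ≤ Real.sqrt (1 + 2 * f t ^ 2) := Real.sqrt_nonneg _
  rcases le_total 0 t with ht | ht
  · have := hmono ht
    simp only [hf0] at this
    rw [abs_of_nonneg ht]
    nlinarith [le_abs_self (f t)]
  · have := hmono ht
    simp only [hf0] at this
    rw [abs_of_nonpos ht]
    nlinarith [neg_abs_le (f t)]

theorem abs_le_abs_add_two_mul_sq (hf0 : f 0 = 0) (t : ℝ) : |t| ≤ |f t| + 2 * f t ^ 2 :=
  calc |t| ≤ |f t| * Real.sqrt (1 + 2 * f t ^ 2) := abs_le_abs_mul_sqrt hf' hf0 t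
    _ ≤ |f t| * (1 + 2 * |f t|) := by gcongr; exact sqrt_one_add_two_mul_sq_le _
    _ = |f t| + 2 * f t ^ 2 := by rw [← sq_abs (f t)]; ring

end DualChange

section Interpolation

variable {α ε : Type*} [MeasurableSpace α] {μ : Measure α} [TopologicalSpace ε]
  [ContinuousENorm ε] {w : α → ε}

theorem eLpNorm'_le_eLpNorm'_add_eLpNorm' (hw : AEStronglyMeasurable w μ) {p q r : ℝ}
    (hp : 0 < p) (hpq : p ≤ q) (hqr : q ≤ r) :
    eLpNorm' w q μ ≤ eLpNorm' w p μ + eLpNorm' w r μ := by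
  rcases hpq.eq_or_lt with rfl | hpq
  · exact le_self_add
  set M := eLpNorm' w p μ + eLpNorm' w r μ
  set θ := (r - q) / (r - p)
  have hθ : 0 ≤ θ := div_nonneg (by linarith) (by linarith)
  have hθ' : 0 ≤ 1 - θ := by
    rw [sub_nonneg, div_le_one (by linarith)]
    linarith
  have hq : p * θ + r * (1 - θ) = q := by
    have : r - p ≠ 0 := by linarith
    simp only [θ]
    field_simp
    ring
  have hg := hw.enorm
  have hlint : ∫⁻ a, ‖w a‖ₑ ^ q ∂μ ≤ M ^ q :=
    calc ∫⁻ a, ‖w a‖ₑ ^ q ∂μ = ∫⁻ a, (‖w a‖ₑ ^ p) ^ θ * (‖w a‖ₑ ^ r) ^ (1 - θ) ∂μ := by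
          refine lintegral_congr fun a => ?_
          rw [← ENNReal.rpow_mul, ← ENNReal.rpow_mul,
            ← ENNReal.rpow_add_of_nonneg _ _ (mul_nonneg hp.le hθ) (by nlinarith), hq]
      _ ≤ (∫⁻ a, ‖w a‖ₑ ^ p ∂μ) ^ θ * (∫⁻ a, ‖w a‖ₑ ^ r ∂μ) ^ (1 - θ) :=
          ENNReal.lintegral_mul_norm_pow_le (hg.pow_const p) (hg.pow_const r) hθ hθ' (by ring)
      _ = (eLpNorm' w p μ ^ p) ^ θ * (eLpNorm' w r μ ^ r) ^ (1 - θ) := by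
          rw [lintegral_rpow_enorm_eq_rpow_eLpNorm' hp,
            lintegral_rpow_enorm_eq_rpow_eLpNorm' (by linarith)]
      _ ≤ (M ^ p) ^ θ * (M ^ r) ^ (1 - θ) :=
          mul_le_mul' (ENNReal.rpow_le_rpow (ENNReal.rpow_le_rpow le_self_add hp.le) hθ)
            (ENNReal.rpow_le_rpow (ENNReal.rpow_le_rpow le_add_self (by linarith)) hθ')
      _ = M ^ q := by
          rw [← ENNReal.rpow_mul, ← ENNReal.rpow_mul,
            ← ENNReal.rpow_add_of_nonneg _ _ (mul_nonneg hp.le hθ) (by nlinarith), hq]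
  calc eLpNorm' w q μ = (∫⁻ a, ‖w a‖ₑ ^ q ∂μ) ^ (1 / q) := eLpNorm'_eq_lintegral_enorm w q μ
    _ ≤ (M ^ q) ^ (1 / q) := ENNReal.rpow_le_rpow hlint (one_div_pos.2 (by linarith)).le
    _ = M := by rw [← ENNReal.rpow_mul, mul_one_div_cancel (by linarith), ENNReal.rpow_one]

theorem eLpNorm_le_eLpNorm_add_eLpNorm (hw : AEStronglyMeasurable w μ) {p q r : ENNReal}
    (hp : p ≠ 0) (hpq : p ≤ q) (hqr : q ≤ r) (hr : r ≠ ⊤) :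
    eLpNorm w q μ ≤ eLpNorm w p μ + eLpNorm w r μ := by
  have hq : q ≠ ⊤ := ne_top_of_le_ne_top hr hqr
  have hp' : p ≠ ⊤ := ne_top_of_le_ne_top hq hpq
  rw [eLpNorm_eq_eLpNorm' hp hp', eLpNorm_eq_eLpNorm' (ne_bot_of_le_ne_bot hp hpq) hq,
    eLpNorm_eq_eLpNorm' (ne_bot_of_le_ne_bot hp (hpq.trans hqr)) hr]
  exact eLpNorm'_le_eLpNorm'_add_eLpNorm' hw (ENNReal.toReal_pos hp hp')
    (ENNReal.toReal_mono hq hpq) (ENNReal.toReal_mono hr hqr)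

end Interpolation

theorem eLpNorm_two_le_of_abs_le_abs_add_two_mul_sq {α : Type*} [MeasurableSpace α]
    {μ : Measure α} {φ : ℝ → ℝ} (hφ : ∀ t, |t| ≤ |φ t| + 2 * φ t ^ 2) {v : α → ℝ}
    (hv : Measurable v) :
    eLpNorm v 2 μ ≤ 5 * (eLpNorm v 6 μ + eLpNorm (fun x => φ (v x)) 2 μ ^ 2 +
      eLpNorm (fun x => φ (v x)) 2 μ) := by
  set N := eLpNorm (fun x => φ (v x)) 2 μ
  let s := {x | |v x| ≤ 1}
  have hs : MeasurableSet s := measurableSet_le hv.abs measurable_const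
  have hsmall : eLpNorm (s.indicator v) 2 μ ≤ 3 * N := by
    have hpt : ∀ x, ‖s.indicator v x‖ ≤ 3 * ‖φ (v x)‖ := fun x => by
      simp only [Set.indicator_apply, Real.norm_eq_abs]
      split_ifs with hx
      · exact abs_le_three_mul_abs_of_abs_le_one (hφ (v x)) hx
      · rw [abs_zero]; positivity
    simpa using eLpNorm_le_mul_eLpNorm_of_ae_le_mul (.of_forall hpt) 2
  have hlarge : eLpNorm (sᶜ.indicator v) 1 μ ≤ 5 * N ^ 2 := by
    have hpt : ∀ x, ‖sᶜ.indicator v x‖ ≤ 5 * ‖‖φ (v x)‖ ^ (2 : ℝ)‖ := fun x => by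
      simp only [Set.indicator_apply, Real.norm_eq_abs]
      split_ifs with hx
      · rw [Real.rpow_two, sq_abs, abs_of_nonneg (sq_nonneg (φ (v x)))]
        exact abs_le_five_mul_sq_of_one_lt_abs (hφ (v x)) (not_le.1 hx)
      · rw [abs_zero]; positivity
    calc eLpNorm (sᶜ.indicator v) 1 μ
        ≤ ENNReal.ofReal 5 * eLpNorm (fun x => ‖φ (v x)‖ ^ (2 : ℝ)) 1 μ :=
          eLpNorm_le_mul_eLpNorm_of_ae_le_mul (.of_forall hpt) 1
      _ = 5 * N ^ 2 := by
          rw [eLpNorm_norm_rpow _ two_pos, one_mul, ENNReal.ofReal_ofNat, ENNReal.ofReal_ofNat,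
            ENNReal.rpow_two]
  calc eLpNorm v 2 μ = eLpNorm (s.indicator v + sᶜ.indicator v) 2 μ := by
        rw [Set.indicator_self_add_compl]
    _ ≤ eLpNorm (s.indicator v) 2 μ + eLpNorm (sᶜ.indicator v) 2 μ :=
        eLpNorm_add_le (hv.indicator hs).aestronglyMeasurable
          (hv.indicator hs.compl).aestronglyMeasurable one_le_two
    _ ≤ 3 * N + (eLpNorm (sᶜ.indicator v) 1 μ + eLpNorm (sᶜ.indicator v) 6 μ) := by
        gcongr
        exact eLpNorm_le_eLpNorm_add_eLpNorm (hv.indicator hs.compl).aestronglyMeasurable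
          one_ne_zero one_le_two (by norm_num) (by norm_num)
    _ ≤ 3 * N + (5 * N ^ 2 + eLpNorm v 6 μ) := by
        gcongr
        exact eLpNorm_mono fun x => norm_indicator_le_norm_self v x
    _ ≤ 5 * N + (5 * N ^ 2 + 5 * eLpNorm v 6 μ) := by
        gcongr
        · norm_num
        · exact le_mul_of_one_le_left' (by norm_num)
    _ = 5 * (eLpNorm v 6 μ + N ^ 2 + N) := by ring

theorem stmt_15_general (f : ℝ → ℝ) (hf0 : f 0 = 0)
    (hf' : ∀ t : ℝ, HasDerivAt f (1 / Real.sqrt (1 + 2 * f t ^ 2)) t) :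
    ∃ C : ℝ, 0 < C ∧
      ∀ v : EuclideanSpace ℝ (Fin 3) → ℝ, Measurable v →
        eLpNorm v 6 volume < ⊤ →
        eLpNorm (fun x => f (v x)) 2 volume < ⊤ →
        eLpNorm v 2 volume ≤ ENNReal.ofReal C *
          (eLpNorm v 6 volume + eLpNorm (fun x => f (v x)) 2 volume ^ 2 +
            eLpNorm (fun x => f (v x)) 2 volume) := by
  refine ⟨5, by norm_num, fun v hv _ _ => ?_⟩
  rw [ENNReal.ofReal_ofNat]
  exact eLpNorm_two_le_of_abs_le_abs_add_two_mul_sq (abs_le_abs_add_two_mul_sq hf' hf0) hv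

/-- There exists `C > 0` such that for every measurable `v : ℝ³ → ℝ` with finite `L⁶` norm
and with `f ∘ v` of finite `L²` norm, one has
`‖v‖_{L²} ≤ C (‖v‖_{L⁶} + ‖f∘v‖_{L²}² + ‖f∘v‖_{L²})`. -/
theorem stmt_15 (f : ℝ → ℝ) (hf0 : f 0 = 0)
    (hfodd : ∀ t : ℝ, f (-t) = -f t)
    (hf' : ∀ t : ℝ, HasDerivAt f (1 / Real.sqrt (1 + 2 * f t ^ 2)) t) :
    ∃ C : ℝ, 0 < C ∧
      ∀ v : EuclideanSpace ℝ (Fin 3) → ℝ, Measurable v →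
        eLpNorm v 6 volume < ⊤ →
        eLpNorm (fun x => f (v x)) 2 volume < ⊤ →
        eLpNorm v 2 volume ≤ ENNReal.ofReal C *
          (eLpNorm v 6 volume + eLpNorm (fun x => f (v x)) 2 volume ^ 2 +
            eLpNorm (fun x => f (v x)) 2 volume) :=
  stmt_15_general f hf0 hf'
end

section
/- Let p ∈ (2, 12), let g : ℝ → ℝ be continuous with lim_{t→0} g(t)/t = 0 and limsup_{|t|→+∞} |g(t)|/|t|^(p−1) < +∞, and let V : ℝ³ → ℝ be continuous and bounded with inf_{x∈ℝ³} V(x) > 0. Define g̃(x,t) = g(f(t))·f'(t) − V(x)·f(t)·f'(t) + V(x)·t and set q = max{3, p/2}. Then for every ε > 0 there exists C_ε > 0 such that |g̃(x,t)| ≤ ε·|t| + C_ε·|t|^(q−1) for all x ∈ ℝ³ and all t ∈ ℝ. -/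
open Filter Topology Asymptotics

/-! Write `g̃(x, t) = g(f t) f'(t) + V(x) (t - f(t) f'(t))`. Any function that is `o(t)` at `0` and
grows at most like `|t| ^ s`, `s ≤ q - 1`, satisfies `φ t ≤ ε |t| + C_ε |t| ^ (q - 1)`, since away
from `0` both `1` and `|t| ^ s` are dominated by a multiple of `|t| ^ (q - 1)`. Both
`|g(f t)| f'(t)` and `|t - f(t) f'(t)|` are of this kind. Near `0` this follows from `|f t| ≤ |t|`,
`0 < f' ≤ 1` and `0 ≤ 1 - f' ≤ 2 f²`, which makes `t - f f'` cubic. At infinity, `|f| f' ≤ 1` and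
`f² ≤ 2 |t|` give `|g(f t)| f'(t) ≲ 1 + |f t| ^ (p - 2) ≲ 1 + |t| ^ ((p - 2) / 2)`, while
`|t - f f'| ≤ 2 |t|`. -/

lemma abs_le_mul_abs_of_hasDerivAt {φ φ' : ℝ → ℝ} (hφ : ∀ s, HasDerivAt φ (φ' s) s)
    (hφ0 : φ 0 = 0) {C t : ℝ} (hC : ∀ s, |s| ≤ |t| → |φ' s| ≤ C) : |φ t| ≤ C * |t| := by
  have := (convex_uIcc 0 t).norm_image_sub_le_of_norm_hasDerivWithin_le
    (fun s _ => (hφ s).hasDerivWithinAt)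
    (fun s hs => hC s (by simpa using Set.abs_sub_left_of_mem_uIcc hs))
    Set.left_mem_uIcc Set.right_mem_uIcc
  simpa [hφ0] using this

lemma rpow_le_mul_rpow_of_le_abs {s r δ t : ℝ} (hs : s ≤ r) (hδ : 0 < δ) (ht : δ ≤ |t|) :
    |t| ^ s ≤ δ ^ (s - r) * |t| ^ r := by
  have ht0 : 0 < |t| := hδ.trans_le ht
  calc |t| ^ s = |t| ^ (s - r) * |t| ^ r := by rw [← Real.rpow_add ht0, sub_add_cancel]
    _ ≤ δ ^ (s - r) * |t| ^ r := by
      gcongr ?_ * _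
      exact Real.rpow_le_rpow_of_nonpos hδ ht (by linarith)

def EpsPowerBound (r : ℝ) (φ : ℝ → ℝ) : Prop :=
  ∀ ε > 0, ∃ C > 0, ∀ t, φ t ≤ ε * |t| + C * |t| ^ r

namespace EpsPowerBound

variable {r : ℝ} {φ ψ : ℝ → ℝ}

lemma add (hφ : EpsPowerBound r φ) (hψ : EpsPowerBound r ψ) :
    EpsPowerBound r (fun t => φ t + ψ t) := by
  intro ε hε
  obtain ⟨C₁, hC₁, h₁⟩ := hφ (ε / 2) (half_pos hε)
  obtain ⟨C₂, hC₂, h₂⟩ := hψ (ε / 2) (half_pos hε)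
  refine ⟨C₁ + C₂, add_pos hC₁ hC₂, fun t => ?_⟩
  linarith [h₁ t, h₂ t]

lemma const_mul (hφ : EpsPowerBound r φ) {c : ℝ} (hc : 0 ≤ c) :
    EpsPowerBound r (fun t => c * φ t) := by
  intro ε hε
  obtain ⟨C, hC, h⟩ := hφ (ε / (c + 1)) (by positivity)
  refine ⟨c * C + 1, by positivity, fun t => ?_⟩
  have hrt : 0 ≤ |t| ^ r := Real.rpow_nonneg (abs_nonneg t) r
  have hεc : c * (ε / (c + 1)) ≤ ε := by
    rw [mul_div_assoc', div_le_iff₀ (by positivity)]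
    nlinarith
  calc c * φ t ≤ c * (ε / (c + 1) * |t| + C * |t| ^ r) := mul_le_mul_of_nonneg_left (h t) hc
    _ = c * (ε / (c + 1)) * |t| + c * C * |t| ^ r := by ring
    _ ≤ ε * |t| + (c * C + 1) * |t| ^ r := by gcongr; linarith

end EpsPowerBound

lemma epsPowerBound_of_isLittleO {φ : ℝ → ℝ} {r s A B : ℝ} (hr : 0 ≤ r) (hs : s ≤ r)
    (h0 : φ =o[𝓝 0] fun t => t) (hfar : ∀ t, φ t ≤ A + B * |t| ^ s) :
    EpsPowerBound r φ := by
  intro ε hε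
  obtain ⟨δ, hδ, hnear⟩ := Metric.eventually_nhds_iff.mp (h0.def hε)
  refine ⟨|A| * δ ^ (0 - r) + |B| * δ ^ (s - r) + 1, by positivity, fun t => ?_⟩
  have hrt : 0 ≤ |t| ^ r := Real.rpow_nonneg (abs_nonneg t) r
  rcases lt_or_ge |t| δ with ht | ht
  · have hφt := hnear (show dist t 0 < δ by simpa using ht)
    simp only [Real.norm_eq_abs] at hφt
    have : 0 ≤ (|A| * δ ^ (0 - r) + |B| * δ ^ (s - r) + 1) * |t| ^ r := by positivity
    linarith [le_abs_self (φ t)]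
  · have h1 := rpow_le_mul_rpow_of_le_abs (s := 0) hr hδ ht
    have h2 := rpow_le_mul_rpow_of_le_abs hs hδ ht
    rw [Real.rpow_zero] at h1
    calc φ t ≤ |A| * 1 + |B| * |t| ^ s := by
          rw [mul_one]
          exact (hfar t).trans (by gcongr <;> exact le_abs_self _)
      _ ≤ |A| * (δ ^ (0 - r) * |t| ^ r) + |B| * (δ ^ (s - r) * |t| ^ r) := by
          gcongr
      _ ≤ _ := by nlinarith [mul_nonneg hε.le (abs_nonneg t)]

lemma isLittleO_id_of_tendsto_div {g : ℝ → ℝ} (hg : ContinuousAt g 0)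
    (hg0 : Tendsto (fun t => g t / t) (𝓝[≠] 0) (𝓝 0)) : g =o[𝓝 0] fun t => t := by
  have hpunct : g =o[𝓝[≠] 0] fun t => t :=
    (isLittleO_iff_tendsto' (eventually_nhdsWithin_of_forall fun t ht h => absurd h ht)).mpr hg0
  have hg00 : g 0 = 0 :=
    tendsto_nhds_unique (hg.tendsto.mono_left nhdsWithin_le_nhds)
      (hpunct.trans_tendsto (tendsto_id.mono_left nhdsWithin_le_nhds))
  simpa only [Set.insert_eq, Set.union_compl_self, nhdsWithin_univ] using hpunct.insert hg00

lemma exists_abs_le_add_mul_rpow {g : ℝ → ℝ} (hg : Continuous g) {K M e : ℝ} (hK : 0 ≤ K)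
    (h : ∀ t, M ≤ |t| → |g t| ≤ K * |t| ^ e) : ∃ A, ∀ t, |g t| ≤ A + K * |t| ^ e := by
  obtain ⟨G, hG⟩ := (isCompact_Icc (a := -M) (b := M)).exists_bound_of_continuousOn
    hg.continuousOn
  refine ⟨|G|, fun t => ?_⟩
  have hKt : 0 ≤ K * |t| ^ e := mul_nonneg hK (Real.rpow_nonneg (abs_nonneg t) e)
  rcases le_or_gt M |t| with ht | ht
  · linarith [h t ht, abs_nonneg G]
  · have := hG t (abs_le.mp ht.le)
    rw [Real.norm_eq_abs] at this
    linarith [le_abs_self G]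

lemma one_div_sqrt_le_one (y : ℝ) : 1 / √(1 + 2 * y ^ 2) ≤ 1 := by
  rw [div_le_one (by positivity), Real.one_le_sqrt]
  nlinarith [sq_nonneg y]

lemma abs_mul_one_div_sqrt_le_one (y : ℝ) : |y| * (1 / √(1 + 2 * y ^ 2)) ≤ 1 := by
  rw [mul_one_div, div_le_one (by positivity), ← Real.sqrt_sq_eq_abs]
  exact Real.sqrt_le_sqrt (by nlinarith [sq_nonneg y])

lemma one_sub_one_div_sqrt_le (y : ℝ) : 1 - 1 / √(1 + 2 * y ^ 2) ≤ 2 * y ^ 2 := by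
  have hx : 0 < 1 + 2 * y ^ 2 := by positivity
  have hsqrt : √(1 + 2 * y ^ 2) ≤ 1 + 2 * y ^ 2 :=
    Real.sqrt_le_iff.mpr ⟨hx.le, by nlinarith [sq_nonneg y]⟩
  have hrecip : 1 / (1 + 2 * y ^ 2) ≤ 1 / √(1 + 2 * y ^ 2) :=
    one_div_le_one_div_of_le (by positivity) hsqrt
  have hfrac : 1 - 1 / (1 + 2 * y ^ 2) ≤ 2 * y ^ 2 := by
    rw [one_sub_div hx.ne', div_le_iff₀ hx]
    nlinarith [sq_nonneg y]
  linarith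

namespace DualChangeOfVariables

variable {f : ℝ → ℝ} (hf0 : f 0 = 0) (hf' : ∀ t, HasDerivAt f (1 / √(1 + 2 * f t ^ 2)) t)
include hf'

lemma deriv_pos (t : ℝ) : 0 < deriv f t := by
  rw [(hf' t).deriv]
  positivity

lemma deriv_le_one (t : ℝ) : deriv f t ≤ 1 :=
  (hf' t).deriv ▸ one_div_sqrt_le_one (f t)

lemma abs_mul_deriv_le_one (t : ℝ) : |f t| * deriv f t ≤ 1 :=
  (hf' t).deriv ▸ abs_mul_one_div_sqrt_le_one (f t)

include hf0

lemma abs_le (t : ℝ) : |f t| ≤ |t| := by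
  simpa using abs_le_mul_abs_of_hasDerivAt hf' hf0 (C := 1) (t := t) fun s _ => by
    rw [abs_of_pos (by positivity)]
    exact one_div_sqrt_le_one (f s)

lemma sq_le_two_mul_abs (t : ℝ) : f t ^ 2 ≤ 2 * |t| := by
  have hderiv : ∀ s, HasDerivAt (fun u => f u ^ 2) (2 * (f s * deriv f s)) s := fun s =>
    ((hf' s).fun_pow 2).congr_deriv (by rw [(hf' s).deriv]; ring)
  have := abs_le_mul_abs_of_hasDerivAt hderiv (by simp [hf0]) (C := 2) (t := t) fun s _ => by
    rw [abs_mul, abs_mul, abs_of_pos (deriv_pos hf' s), abs_two]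
    linarith [abs_mul_deriv_le_one hf' s]
  rwa [abs_of_nonneg (sq_nonneg _)] at this

lemma abs_sub_mul_deriv_le_two_mul (t : ℝ) : |t - f t * deriv f t| ≤ 2 * |t| := by
  have : |f t * deriv f t| ≤ |t| := by
    rw [abs_mul, abs_of_pos (deriv_pos hf' t)]
    nlinarith [abs_le hf0 hf' t, deriv_le_one hf' t, deriv_pos hf' t, abs_nonneg (f t)]
  linarith [abs_sub t (f t * deriv f t)]

lemma abs_sub_mul_deriv_le_cube (t : ℝ) : |t - f t * deriv f t| ≤ 4 * |t| ^ 3 := by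
  have hsq : ∀ s, f s ^ 2 ≤ s ^ 2 := fun s => sq_le_sq.mpr (abs_le hf0 hf' s)
  have h1D : ∀ s, 0 ≤ 1 - deriv f s ∧ 1 - deriv f s ≤ 2 * s ^ 2 := fun s => by
    refine ⟨by linarith [deriv_le_one hf' s], ?_⟩
    rw [(hf' s).deriv]
    linarith [one_sub_one_div_sqrt_le (f s), hsq s]
  have hid : |t - f t| ≤ 2 * t ^ 2 * |t| :=
    abs_le_mul_abs_of_hasDerivAt (fun s => (hasDerivAt_id s).sub (hf' s)) (by simp [hf0])
      fun s hs => by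
        rw [← (hf' s).deriv, abs_of_nonneg (h1D s).1]
        nlinarith [(h1D s).2, sq_le_sq.mpr hs, sq_abs s, sq_abs t]
  have hcorr : |f t * (1 - deriv f t)| ≤ |t| * (2 * t ^ 2) := by
    rw [abs_mul, abs_of_nonneg (h1D t).1]
    exact mul_le_mul (abs_le hf0 hf' t) (h1D t).2 (h1D t).1 (abs_nonneg t)
  calc |t - f t * deriv f t| = |(t - f t) + f t * (1 - deriv f t)| := by ring_nf
    _ ≤ |t - f t| + |f t * (1 - deriv f t)| := abs_add_le _ _
    _ ≤ 2 * t ^ 2 * |t| + |t| * (2 * t ^ 2) := add_le_add hid hcorr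
    _ = 4 * |t| ^ 3 := by rw [← sq_abs]; ring

lemma rpow_mul_deriv_le {p : ℝ} (hp : 2 ≤ p) (t : ℝ) :
    |f t| ^ (p - 1) * deriv f t ≤ 2 ^ ((p - 2) / 2) * |t| ^ ((p - 2) / 2) := by
  have hsplit : |f t| ^ (p - 1) = |f t| ^ (p - 2) * |f t| := by
    rw [← Real.rpow_add_one' (abs_nonneg _) (by linarith)]
    ring_nf
  have hsq : |f t| ^ (p - 2) = (f t ^ 2) ^ ((p - 2) / 2) := by
    rw [← sq_abs, ← Real.rpow_natCast, ← Real.rpow_mul (abs_nonneg _)]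
    ring_nf
  calc |f t| ^ (p - 1) * deriv f t = |f t| ^ (p - 2) * (|f t| * deriv f t) := by
        rw [hsplit, mul_assoc]
    _ ≤ (f t ^ 2) ^ ((p - 2) / 2) * 1 := by
        rw [hsq]
        exact mul_le_mul_of_nonneg_left (abs_mul_deriv_le_one hf' t) (by positivity)
    _ ≤ (2 * |t|) ^ ((p - 2) / 2) := by
        rw [mul_one]
        exact Real.rpow_le_rpow (sq_nonneg _) (sq_le_two_mul_abs hf0 hf' t) (by linarith)
    _ = 2 ^ ((p - 2) / 2) * |t| ^ ((p - 2) / 2) := Real.mul_rpow zero_le_two (abs_nonneg t)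

lemma epsPowerBound_abs_sub_mul_deriv {r : ℝ} (hr : 1 ≤ r) :
    EpsPowerBound r fun t => |t - f t * deriv f t| := by
  have hcube : (fun t => |t - f t * deriv f t|) =O[𝓝 0] fun t => t ^ 3 :=
    .of_bound 4 <| .of_forall fun t => by
      simpa [abs_abs, abs_pow] using abs_sub_mul_deriv_le_cube hf0 hf' t
  refine epsPowerBound_of_isLittleO (A := 0) (B := 2) (s := 1) (by linarith) hr
    (hcube.trans_isLittleO (isLittleO_pow_id (by norm_num))) fun t => ?_
  simpa using abs_sub_mul_deriv_le_two_mul hf0 hf' t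

lemma epsPowerBound_abs_comp_mul_deriv {g : ℝ → ℝ} (hg : Continuous g)
    (hg0 : Tendsto (fun t => g t / t) (𝓝[≠] 0) (𝓝 0)) {K M p r : ℝ} (hK : 0 ≤ K)
    (hgM : ∀ t, M ≤ |t| → |g t| ≤ K * |t| ^ (p - 1)) (hp : 2 ≤ p) (hr : 0 ≤ r)
    (hpr : (p - 2) / 2 ≤ r) :
    EpsPowerBound r fun t => |g (f t)| * deriv f t := by
  have hf : Tendsto f (𝓝 0) (𝓝 0) := by simpa [hf0] using (hf' 0).continuousAt.tendsto
  have hfO : f =O[𝓝 0] fun t => t :=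
    .of_bound 1 <| .of_forall fun t => by simpa using abs_le hf0 hf' t
  have hnear : (fun t => |g (f t)| * deriv f t) =O[𝓝 0] fun t => g (f t) :=
    .of_bound 1 <| .of_forall fun t => by
      rw [Real.norm_eq_abs, Real.norm_eq_abs, abs_of_nonneg (by positivity [deriv_pos hf' t]),
        one_mul]
      exact mul_le_of_le_one_right (abs_nonneg _) (deriv_le_one hf' t)
  obtain ⟨A, hA⟩ := exists_abs_le_add_mul_rpow hg hK hgM
  refine epsPowerBound_of_isLittleO (A := |A|) (B := K * 2 ^ ((p - 2) / 2)) hr hpr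
    (hnear.trans_isLittleO (((isLittleO_id_of_tendsto_div hg.continuousAt hg0).comp_tendsto
      hf).trans_isBigO hfO)) fun t => ?_
  calc |g (f t)| * deriv f t ≤ (|A| + K * |f t| ^ (p - 1)) * deriv f t := by
        refine mul_le_mul_of_nonneg_right ((hA (f t)).trans ?_) (deriv_pos hf' t).le
        gcongr
        exact le_abs_self A
    _ = |A| * deriv f t + K * (|f t| ^ (p - 1) * deriv f t) := by ring
    _ ≤ |A| * 1 + K * (2 ^ ((p - 2) / 2) * |t| ^ ((p - 2) / 2)) := by
        gcongr ?_ + ?_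
        · exact mul_le_mul_of_nonneg_left (deriv_le_one hf' t) (abs_nonneg A)
        · exact mul_le_mul_of_nonneg_left (rpow_mul_deriv_le hf0 hf' hp t) hK
    _ = |A| + K * 2 ^ ((p - 2) / 2) * |t| ^ ((p - 2) / 2) := by ring

end DualChangeOfVariables

theorem stmt_16_general (f : ℝ → ℝ) (hf0 : f 0 = 0)
    (hf' : ∀ t : ℝ, HasDerivAt f (1 / Real.sqrt (1 + 2 * f t ^ 2)) t)
    (p : ℝ) (hp2 : 2 < p)
    (g : ℝ → ℝ) (hg : Continuous g)
    (hg0 : Tendsto (fun t : ℝ => g t / t) (𝓝[≠] 0) (𝓝 0))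
    (hginf : ∃ K M : ℝ, 0 < K ∧ 0 < M ∧ ∀ t : ℝ, M ≤ |t| → |g t| ≤ K * |t| ^ (p - 1))
    (V : EuclideanSpace ℝ (Fin 3) → ℝ)
    (hVbdd : ∃ B : ℝ, ∀ x, V x ≤ B)
    (hVpos : ∃ V₀ : ℝ, 0 < V₀ ∧ ∀ x, V₀ ≤ V x) :
    ∀ ε : ℝ, 0 < ε → ∃ C : ℝ, 0 < C ∧
      ∀ (x : EuclideanSpace ℝ (Fin 3)) (t : ℝ),
        |g (f t) * deriv f t - V x * (f t * deriv f t) + V x * t| ≤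
          ε * |t| + C * |t| ^ (max 3 (p / 2) - 1) := by
  obtain ⟨K, M, hK, -, hgM⟩ := hginf
  obtain ⟨B, hB⟩ := hVbdd
  obtain ⟨V₀, hV₀, hV₀le⟩ := hVpos
  have hVabs : ∀ x, |V x| ≤ B := fun x => abs_le.mpr ⟨by linarith [hV₀le x, hB x], hB x⟩
  have hbound : EpsPowerBound (max 3 (p / 2) - 1)
      fun t => |g (f t)| * deriv f t + B * |t - f t * deriv f t| :=
    (DualChangeOfVariables.epsPowerBound_abs_comp_mul_deriv hf0 hf' hg hg0 hK.le hgM hp2.le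
      (by linarith [le_max_left 3 (p / 2)]) (by linarith [le_max_right 3 (p / 2)])).add
    ((DualChangeOfVariables.epsPowerBound_abs_sub_mul_deriv hf0 hf'
      (by linarith [le_max_left 3 (p / 2)])).const_mul ((abs_nonneg _).trans (hVabs 0)))
  intro ε hε
  obtain ⟨C, hC, hφ⟩ := hbound ε hε
  refine ⟨C, hC, fun x t => le_trans ?_ (hφ t)⟩
  have hD := DualChangeOfVariables.deriv_pos hf' t
  calc |g (f t) * deriv f t - V x * (f t * deriv f t) + V x * t|
      = |g (f t) * deriv f t + V x * (t - f t * deriv f t)| := by ring_nf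
    _ ≤ |g (f t) * deriv f t| + |V x * (t - f t * deriv f t)| := abs_add_le _ _
    _ = |g (f t)| * deriv f t + |V x| * |t - f t * deriv f t| := by
        rw [abs_mul, abs_mul, abs_of_pos hD]
    _ ≤ |g (f t)| * deriv f t + B * |t - f t * deriv f t| := by
        gcongr
        exact hVabs x

/-- For `g̃(x,t) = g(f(t)) f'(t) − V(x) f(t) f'(t) + V(x) t` and `q = max{3, p/2}`:
for every `ε > 0` there exists `C_ε > 0` such that
`|g̃(x,t)| ≤ ε|t| + C_ε |t|^(q−1)` for all `x ∈ ℝ³`, `t ∈ ℝ`. -/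
theorem stmt_16 (f : ℝ → ℝ) (hf0 : f 0 = 0)
    (hfodd : ∀ t : ℝ, f (-t) = -f t)
    (hf' : ∀ t : ℝ, HasDerivAt f (1 / Real.sqrt (1 + 2 * f t ^ 2)) t)
    (p : ℝ) (hp2 : 2 < p) (hp12 : p < 12)
    (g : ℝ → ℝ) (hg : Continuous g)
    (hg0 : Tendsto (fun t : ℝ => g t / t) (𝓝[≠] 0) (𝓝 0))
    (hginf : ∃ K M : ℝ, 0 < K ∧ 0 < M ∧ ∀ t : ℝ, M ≤ |t| → |g t| ≤ K * |t| ^ (p - 1))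
    (V : EuclideanSpace ℝ (Fin 3) → ℝ) (hV : Continuous V)
    (hVbdd : ∃ B : ℝ, ∀ x, V x ≤ B)
    (hVpos : ∃ V₀ : ℝ, 0 < V₀ ∧ ∀ x, V₀ ≤ V x) :
    ∀ ε : ℝ, 0 < ε → ∃ C : ℝ, 0 < C ∧
      ∀ (x : EuclideanSpace ℝ (Fin 3)) (t : ℝ),
        |g (f t) * deriv f t - V x * (f t * deriv f t) + V x * t| ≤
          ε * |t| + C * |t| ^ (max 3 (p / 2) - 1) :=
  stmt_16_general f hf0 hf' p hp2 g hg hg0 hginf V hVbdd hVpos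
end

section
/- Let g : ℝ → ℝ be continuous, let G(t) = ∫₀ᵗ g(s) ds, and suppose G(t) > 0 for all t ≠ 0 and g(t)·t ≥ 4·G(t) for all t ∈ ℝ. Then the function t ↦ G(t)/t² is nondecreasing on (0, +∞) and nonincreasing on (−∞, 0); in particular, for t, s ≠ 0 with |t| ≤ |s| and t·s > 0, one has G(t)/t² ≤ G(s)/s². -/
/-!
The derivative of `G(t)/t²` is `(g(t) t - 2 G(t)) / t³`, and `g(t) t - 2 G(t) ≥ 2 G(t) ≥ 0`, so
the quotient increases where `t > 0` and decreases where `t < 0`. The negative half-line is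
reduced to the positive one by the reflection `t ↦ -t`, which preserves the hypothesis.
-/

open Set

theorem monotoneOn_div_pow_of_hasDerivAt {F f : ℝ → ℝ} {n : ℕ}
    (hF : ∀ t, 0 < t → HasDerivAt F (f t) t) (hFf : ∀ t, 0 < t → n * F t ≤ f t * t) :
    MonotoneOn (fun t => F t / t ^ n) (Ioi 0) := by
  have hquot : ∀ t, 0 < t → HasDerivAt (fun u => F u / u ^ n)
      ((f t * t - n * F t) / t ^ (n + 1)) t := by
    intro t ht
    refine ((hF t ht).div (hasDerivAt_pow n t) (pow_ne_zero n ht.ne')).congr_deriv ?_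
    rcases n with _ | n
    · simp [ht.ne']
    · simp only [Nat.add_sub_cancel]
      field_simp
      ring
  refine monotoneOn_of_hasDerivWithinAt_nonneg (f' := fun t => (f t * t - n * F t) / t ^ (n + 1))
    (convex_Ioi 0) (fun t ht => (hquot t ht).continuousAt.continuousWithinAt) ?_ ?_ <;>
    rw [interior_Ioi]
  · exact fun t ht => (hquot t ht).hasDerivWithinAt
  · exact fun t ht => div_nonneg (sub_nonneg.mpr (hFf t ht)) (pow_pos ht _).le

theorem antitoneOn_div_pow_of_hasDerivAt {F f : ℝ → ℝ} {n : ℕ} (hn : Even n)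
    (hF : ∀ t, t < 0 → HasDerivAt F (f t) t) (hFf : ∀ t, t < 0 → n * F t ≤ f t * t) :
    AntitoneOn (fun t => F t / t ^ n) (Iio 0) := by
  have hreflect : MonotoneOn (fun t => F (-t) / t ^ n) (Ioi 0) := by
    refine monotoneOn_div_pow_of_hasDerivAt (f := fun t => -f (-t)) (fun t ht => ?_) ?_
    · simpa [Function.comp_def] using (hF (-t) (neg_neg_of_pos ht)).comp t (hasDerivAt_neg t)
    · intro t ht
      simpa using hFf (-t) (neg_neg_of_pos ht)
  intro a ha b hb hab
  have h := hreflect (neg_pos.mpr (mem_Iio.mp hb)) (neg_pos.mpr (mem_Iio.mp ha)) (neg_le_neg hab)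
  simpa only [neg_neg, hn.neg_pow] using h

theorem le_of_abs_le_of_monotoneOn_Ioi_of_antitoneOn_Iio {φ : ℝ → ℝ}
    (hpos : MonotoneOn φ (Ioi 0)) (hneg : AntitoneOn φ (Iio 0)) {t s : ℝ}
    (hts : |t| ≤ |s|) (hsign : 0 < t * s) : φ t ≤ φ s := by
  rcases pos_and_pos_or_neg_and_neg_of_mul_pos hsign with ⟨ht, hs⟩ | ⟨ht, hs⟩
  · rw [abs_of_pos ht, abs_of_pos hs] at hts
    exact hpos ht hs hts
  · rw [abs_of_neg ht, abs_of_neg hs] at hts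
    exact hneg hs ht (neg_le_neg_iff.mp hts)

/-- If `G(t) = ∫₀ᵗ g > 0` for `t ≠ 0` and `g(t) t ≥ 4 G(t)` for all `t`, then
`t ↦ G(t)/t²` is nondecreasing on `(0,∞)` and nonincreasing on `(−∞,0)`; in particular,
for `t, s ≠ 0` with `|t| ≤ |s|` and `t·s > 0`, `G(t)/t² ≤ G(s)/s²`. -/
theorem stmt_18 (g : ℝ → ℝ) (hg : Continuous g)
    (hGpos : ∀ t : ℝ, t ≠ 0 → 0 < ∫ s in (0 : ℝ)..t, g s)
    (hAR : ∀ t : ℝ, 4 * ∫ s in (0 : ℝ)..t, g s ≤ g t * t) :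
    MonotoneOn (fun t => (∫ s in (0 : ℝ)..t, g s) / t ^ 2) (Set.Ioi (0 : ℝ)) ∧
    AntitoneOn (fun t => (∫ s in (0 : ℝ)..t, g s) / t ^ 2) (Set.Iio (0 : ℝ)) ∧
    (∀ t s : ℝ, t ≠ 0 → s ≠ 0 → |t| ≤ |s| → 0 < t * s →
      (∫ u in (0 : ℝ)..t, g u) / t ^ 2 ≤ (∫ u in (0 : ℝ)..s, g u) / s ^ 2) := by
  have hderiv : ∀ t, HasDerivAt (fun t => ∫ s in (0 : ℝ)..t, g s) (g t) t := fun t =>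
    intervalIntegral.integral_hasDerivAt_right (hg.intervalIntegrable _ _)
      (hg.stronglyMeasurableAtFilter _ _) hg.continuousAt
  have hsuper : ∀ t, t ≠ 0 → ((2 : ℕ) : ℝ) * ∫ s in (0 : ℝ)..t, g s ≤ g t * t := by
    intro t ht
    push_cast
    linarith [hGpos t ht, hAR t]
  have hmono := monotoneOn_div_pow_of_hasDerivAt (fun t _ => hderiv t)
    (fun t ht => hsuper t ht.ne')
  have hanti := antitoneOn_div_pow_of_hasDerivAt even_two (fun t _ => hderiv t)
    (fun t ht => hsuper t ht.ne)
  exact ⟨hmono, hanti, fun t s _ _ hts hsign =>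
    le_of_abs_le_of_monotoneOn_Ioi_of_antitoneOn_Iio hmono hanti hts hsign⟩
end
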